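/- arXiv:2012.07417 — 7 statements merged into one kernel-verified Lean document; each statement's English description precedes it below -/
import Mathlib

section
/- Let m ≥ 3 and let x_1, ..., x_m be real numbers with 0 ≤ x_i ≤ 1 and ∑_{i=1}^m x_i = m - 1. Then ∑_{i=1}^m arccos(x_i x_{i+1}) ≥ π, where indices are taken modulo m (so x_{m+1} = x_1). -/
/-!
With `y = 1 - x` the constraints say `y ≥ 0` and `∑ y = 1`. Moving mass `t` between two
coordinates `i, j` that are neither equal nor adjacent changes every product `x e * x (e + 1)`
affinely in `t`; since `arccos` is concave on `[0, 1]`, the cyclic sum is concave in `t`, so it does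
not increase at one of the two ends of the admissible range, where one more coordinate equals `1`.
Repeating this, the coordinates different from `1` become pairwise adjacent: for `m ≥ 4` they lie in
some `{q, q + 1}`, and for `m = 3` nothing needs to be done. Both cases reduce to
`arccos (a b) + arccos (b c) + arccos (c a) ≥ π` for `a, b, c ∈ [0, 1]` with `a + b + c = 2`
(with `a = 1` in the first case), which holds because `cos (π - arccos (b c) - arccos (c a)) ≥ a b`,
a polynomial inequality.
-/

open Real Finset

theorem concaveOn_arccos : ConcaveOn ℝ (Set.Icc 0 1) arccos := by
  refine AntitoneOn.concaveOn_of_deriv (convex_Icc 0 1) continuous_arccos.continuousOn ?_ ?_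
  · rw [interior_Icc]
    intro y hy
    exact (differentiableAt_arccos.2 ⟨by linarith [hy.1], hy.2.ne⟩).differentiableWithinAt
  · rw [interior_Icc, deriv_arccos]
    intro a ha b hb hab
    have hb' : 0 < √(1 - b ^ 2) := sqrt_pos.2 (by nlinarith [hb.1, hb.2])
    have : √(1 - b ^ 2) ≤ √(1 - a ^ 2) := sqrt_le_sqrt (by nlinarith [ha.1])
    exact neg_le_neg (one_div_le_one_div_of_le hb' this)

theorem concaveOn_arccos_mul_of_mul_eq_zero {a b c d : ℝ} (h : c * d = 0) :
    ConcaveOn ℝ ((fun t => (a + t * c) * (b + t * d)) ⁻¹' Set.Icc 0 1)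
      (fun t => arccos ((a + t * c) * (b + t * d))) := by
  have hg (t : ℝ) :
      (a + t * c) * (b + t * d) = AffineMap.lineMap (a * b) (a * b + (c * b + a * d)) t := by
    rw [AffineMap.lineMap_apply_ring']
    linear_combination t ^ 2 * h
  simp only [hg]
  exact concaveOn_arccos.comp_affineMap _

theorem pi_le_arccos_add_arccos_add_arccos {u v w : ℝ} (hu₀ : -1 ≤ u) (hu₁ : u ≤ 1)
    (hv₀ : -1 ≤ v) (hv₁ : v ≤ 1) (h : w + u * v ≤ √(1 - u ^ 2) * √(1 - v ^ 2)) :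
    π ≤ arccos u + arccos v + arccos w := by
  rcases le_or_gt π (arccos u + arccos v) with hle | hlt
  · linarith [arccos_nonneg w]
  have hcos : cos (π - (arccos u + arccos v)) = √(1 - u ^ 2) * √(1 - v ^ 2) - u * v := by
    rw [cos_pi_sub, cos_add, cos_arccos hu₀ hu₁, cos_arccos hv₀ hv₁, sin_arccos, sin_arccos]
    ring
  have : π - (arccos u + arccos v) ≤ arccos w := by
    calc π - (arccos u + arccos v)
        = arccos (cos (π - (arccos u + arccos v))) :=
          (arccos_cos (by linarith) (by linarith [arccos_nonneg u, arccos_nonneg v])).symm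
      _ ≤ arccos w := arccos_le_arccos (by rw [hcos]; linarith)
  linarith

theorem sq_mul_add_mul_le_of_add_add_eq_two {a b c : ℝ} (ha₁ : a ≤ 1) (hb₁ : b ≤ 1)
    (hc₀ : 0 ≤ c) (hc₁ : c ≤ 1) (h : a + b + c = 2) :
    (a * b + b * c * (c * a)) ^ 2 ≤ (1 - (b * c) ^ 2) * (1 - (c * a) ^ 2) := by
  -- The gap is a concave quadratic in `s = (1 - a) (1 - b)`, which ranges over `[0, c² / 4]`.
  obtain ⟨s, hs_def⟩ : ∃ s, s = (1 - a) * (1 - b) := ⟨_, rfl⟩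
  have hs : 0 ≤ s := hs_def ▸ mul_nonneg (sub_nonneg.2 ha₁) (sub_nonneg.2 hb₁)
  have hs' : s ≤ c ^ 2 / 4 := by nlinarith [sq_nonneg (a - b)]
  have key : (1 - (b * c) ^ 2) * (1 - (c * a) ^ 2) - (a * b + b * c * (c * a)) ^ 2
      = c * (1 - c) * (3 * c ^ 2 - 3 * c + 2) + (4 * c ^ 3 - 2 * c ^ 2 + 2 * c - 2) * s
        - (1 + 2 * c ^ 2) * s ^ 2 := by
    obtain rfl : c = 2 - a - b := by linarith
    rw [hs_def]
    ring
  nlinarith [mul_nonneg hs (sub_nonneg.2 hs'), mul_nonneg hc₀ (sub_nonneg.2 hc₁),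
    mul_nonneg (mul_nonneg hc₀ (sub_nonneg.2 hc₁)) hs,
    mul_nonneg (mul_nonneg hc₀ hc₀) hs, mul_nonneg (mul_nonneg hc₀ hc₀) (sub_nonneg.2 hc₁)]

theorem pi_le_arccos_mul_add_arccos_mul_add_arccos_mul {a b c : ℝ} (ha₀ : 0 ≤ a) (ha₁ : a ≤ 1)
    (hb₀ : 0 ≤ b) (hb₁ : b ≤ 1) (hc₀ : 0 ≤ c) (hc₁ : c ≤ 1) (h : a + b + c = 2) :
    π ≤ arccos (a * b) + arccos (b * c) + arccos (c * a) := by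
  have hbc : b * c ≤ 1 := mul_le_one₀ hb₁ hc₀ hc₁
  have hca : c * a ≤ 1 := mul_le_one₀ hc₁ ha₀ ha₁
  have hbc₀ : 0 ≤ b * c := mul_nonneg hb₀ hc₀
  have hca₀ : 0 ≤ c * a := mul_nonneg hc₀ ha₀
  have key : a * b + b * c * (c * a) ≤ √(1 - (b * c) ^ 2) * √(1 - (c * a) ^ 2) := by
    rw [← sqrt_mul (by nlinarith)]
    exact (le_abs_self _).trans
      (abs_le_sqrt (sq_mul_add_mul_le_of_add_add_eq_two ha₁ hb₁ hc₀ hc₁ h))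
  have := pi_le_arccos_add_arccos_add_arccos (by linarith) hbc (by linarith) hca key
  linarith

section Transfer

variable {ι : Type*}

section

variable [DecidableEq ι]

def transfer (x : ι → ℝ) (i j : ι) (t : ℝ) : ι → ℝ := x + t • (Pi.single i 1 - Pi.single j 1)

variable {x : ι → ℝ} {i j : ι} {t : ℝ}

theorem transfer_zero : transfer x i j 0 = x := by
  simp [transfer]

theorem transfer_neg : transfer x i j (-t) = transfer x j i t := by
  rw [transfer, transfer, neg_smul, ← smul_neg, neg_sub]

theorem transfer_apply_left (hij : i ≠ j) : transfer x i j t i = x i + t := by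
  simp [transfer, hij]

theorem transfer_apply_right (hij : i ≠ j) : transfer x i j t j = x j - t := by
  simp [transfer, hij.symm, sub_eq_add_neg]

theorem transfer_apply_of_ne {e : ι} (hei : e ≠ i) (hej : e ≠ j) : transfer x i j t e = x e := by
  simp [transfer, hei, hej]

end

variable [Fintype ι]

/-- The deficits `1 - x e` are nonnegative and sum to `1`. -/
structure UnitDeficit (x : ι → ℝ) : Prop where
  le_one : ∀ e, x e ≤ 1
  sum_eq : ∑ e, x e = Fintype.card ι - 1

noncomputable def arccosEdgeSum (σ : ι → ι) (x : ι → ℝ) : ℝ := ∑ e, arccos (x e * x (σ e))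

namespace UnitDeficit

variable {x : ι → ℝ}

theorem sum_one_sub (hx : UnitDeficit x) : ∑ e, (1 - x e) = 1 := by
  simp [Finset.sum_sub_distrib, hx.sum_eq]

theorem nonneg (hx : UnitDeficit x) (e : ι) : 0 ≤ x e := by
  have := single_le_sum (fun i _ => sub_nonneg.2 (hx.le_one i)) (mem_univ e)
  linarith [hx.sum_one_sub]

theorem mul_mem_Icc (hx : UnitDeficit x) (e e' : ι) : x e * x e' ∈ Set.Icc 0 1 :=
  ⟨mul_nonneg (hx.nonneg e) (hx.nonneg e'), mul_le_one₀ (hx.le_one e) (hx.nonneg e') (hx.le_one e')⟩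

theorem exists_ne_one (hx : UnitDeficit x) : ∃ e, x e ≠ 1 := by
  by_contra! h
  simpa [h] using hx.sum_one_sub

end UnitDeficit

variable [DecidableEq ι] {x : ι → ℝ} {i j : ι} {t : ℝ}

theorem sum_transfer : ∑ e, transfer x i j t e = ∑ e, x e := by
  simp [transfer, sum_add_distrib, ← mul_sum, sum_sub_distrib, sum_pi_single']

theorem UnitDeficit.transfer (hx : UnitDeficit x) (hij : i ≠ j)
    (ht : t ∈ Set.Icc (x j - 1) (1 - x i)) : UnitDeficit (transfer x i j t) where
  le_one e := by
    by_cases hei : e = i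
    · rw [hei, transfer_apply_left hij]
      linarith [ht.2]
    by_cases hej : e = j
    · rw [hej, transfer_apply_right hij]
      linarith [ht.1]
    rw [transfer_apply_of_ne hei hej]
    exact hx.le_one e
  sum_eq := sum_transfer.trans hx.sum_eq

theorem card_ne_one_transfer_lt (hij : i ≠ j) (hi : x i ≠ 1) (hj : x j ≠ 1) :
    #{e | transfer x i j (1 - x i) e ≠ 1} < #{e | x e ≠ 1} := by
  refine (card_le_card fun e he => ?_).trans_lt (card_erase_lt_of_mem (a := i) (by simpa using hi))
  simp only [mem_filter, mem_univ, true_and, mem_erase] at he ⊢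
  by_cases hei : e = i
  · rw [hei, transfer_apply_left hij, add_sub_cancel] at he
    exact absurd rfl he
  by_cases hej : e = j
  · exact ⟨hei, hej ▸ hj⟩
  rw [transfer_apply_of_ne hei hej] at he
  exact ⟨hei, he⟩

theorem concaveOn_arccosEdgeSum_transfer (σ : ι → ι) (hx : UnitDeficit x) (hij : i ≠ j)
    (hσ : ∀ e ∈ ({i, j} : Set ι), σ e ∉ ({i, j} : Set ι)) :
    ConcaveOn ℝ (Set.Icc (x j - 1) (1 - x i)) (fun t => arccosEdgeSum σ (transfer x i j t)) := by
  set d : ι → ℝ := Pi.single i 1 - Pi.single j 1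
  have hd : ∀ e ∉ ({i, j} : Set ι), d e = 0 := by
    intro e he
    simp only [Set.mem_insert_iff, Set.mem_singleton_iff, not_or] at he
    simp [d, he.1, he.2]
  have hedge (e : ι) : ConcaveOn ℝ (Set.Icc (x j - 1) (1 - x i))
      (fun t => arccos (transfer x i j t e * transfer x i j t (σ e))) := by
    have hmul : d e * d (σ e) = 0 := by
      by_cases he : e ∈ ({i, j} : Set ι)
      · rw [hd _ (hσ e he), mul_zero]
      · rw [hd e he, zero_mul]
    exact (concaveOn_arccos_mul_of_mul_eq_zero hmul).subset
      (fun t ht => (hx.transfer hij ht).mul_mem_Icc e (σ e)) (convex_Icc _ _)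
  have := sum_induction (s := univ) _ (ConcaveOn ℝ (Set.Icc (x j - 1) (1 - x i)))
    (fun _ _ => ConcaveOn.add) (concaveOn_const 0 (convex_Icc _ _)) (fun e _ => hedge e)
  simpa only [arccosEdgeSum, Finset.sum_fn] using this

theorem UnitDeficit.exists_card_ne_one_lt (σ : ι → ι) (hx : UnitDeficit x) (hij : i ≠ j)
    (hi : x i ≠ 1) (hj : x j ≠ 1) (hσ : ∀ e ∈ ({i, j} : Set ι), σ e ∉ ({i, j} : Set ι)) :
    ∃ y, UnitDeficit y ∧ #{e | y e ≠ 1} < #{e | x e ≠ 1} ∧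
      arccosEdgeSum σ y ≤ arccosEdgeSum σ x := by
  have hlo : x j - 1 ≤ 0 := by linarith [hx.le_one j]
  have hhi : 0 ≤ 1 - x i := by linarith [hx.le_one i]
  have hmin := (concaveOn_arccosEdgeSum_transfer σ hx hij hσ).min_le_of_mem_Icc
    (Set.left_mem_Icc.2 (hlo.trans hhi)) (Set.right_mem_Icc.2 (hlo.trans hhi)) ⟨hlo, hhi⟩
  simp only [transfer_zero] at hmin
  rcases min_le_iff.1 hmin with h | h
  · refine ⟨_, hx.transfer hij (Set.left_mem_Icc.2 (hlo.trans hhi)), ?_, h⟩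
    rw [← neg_sub, transfer_neg]
    exact card_ne_one_transfer_lt (Ne.symm hij) hj hi
  · exact ⟨_, hx.transfer hij (Set.right_mem_Icc.2 (hlo.trans hhi)),
      card_ne_one_transfer_lt hij hi hj, h⟩

end Transfer

section Cycle

open Fin.CommRing

variable {m : ℕ} [NeZero m]

theorem Fin.exists_forall_eq_or_eq_add_one (hm : 4 ≤ m) {P : Fin m → Prop}
    (hP : ∀ i j, P i → P j → i ≠ j → i + 1 = j ∨ j + 1 = i) {p : Fin m} (hp : P p) :
    ∃ q, ∀ e, P e → e = q ∨ e = q + 1 := by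
  have h1 : (1 : Fin m) ≠ 0 := by simp [Fin.ext_iff, Nat.mod_eq_of_lt (by omega : 1 < m)]
  have h2 : (2 : Fin m) ≠ 0 := by simp [Fin.ext_iff, Nat.mod_eq_of_lt (by omega : 2 < m)]
  have h3 : (3 : Fin m) ≠ 0 := by simp [Fin.ext_iff, Nat.mod_eq_of_lt (by omega : 3 < m)]
  have hadj (e : Fin m) (he : P e) (hne : e ≠ p) : e = p + 1 ∨ e = p - 1 := by
    rcases hP p e hp he hne.symm with h | h
    · exact .inl h.symm
    · exact .inr (eq_sub_of_add_eq h)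
  by_cases hprev : P (p - 1)
  · refine ⟨p - 1, fun e he => ?_⟩
    rcases eq_or_ne e p with rfl | hne
    · exact .inr (sub_add_cancel e 1).symm
    rcases hadj e he hne with rfl | rfl
    · rcases hP (p - 1) (p + 1) hprev he (fun h => h2 (by linear_combination -h)) with h | h
      · exact absurd (by linear_combination -h) h1
      · exact absurd (by linear_combination h) h3
    · exact .inl rfl
  · refine ⟨p, fun e he => ?_⟩
    rcases eq_or_ne e p with rfl | hne
    · exact .inl rfl
    rcases hadj e he hne with rfl | rfl
    · exact .inr rfl
    · exact absurd he hprev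

theorem pi_le_arccosEdgeSum_of_eq_one (hm : 3 ≤ m) {x : Fin m → ℝ} (hx : UnitDeficit x)
    (q : Fin m) (hq : ∀ e, e ≠ q → e ≠ q + 1 → x e = 1) :
    π ≤ arccosEdgeSum (· + 1) x := by
  have h1 : (1 : Fin m) ≠ 0 := by simp [Fin.ext_iff, Nat.mod_eq_of_lt (by omega : 1 < m)]
  have h2 : (2 : Fin m) ≠ 0 := by simp [Fin.ext_iff, Nat.mod_eq_of_lt (by omega : 2 < m)]
  have hq1 : q ≠ q + 1 := fun h => h1 (by linear_combination -h)
  have hprev₁ : q - 1 ≠ q := fun h => h1 (by linear_combination -h)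
  have hprev₂ : q - 1 ≠ q + 1 := fun h => h2 (by linear_combination -h)
  have hprev : x (q - 1) = 1 := hq _ hprev₁ hprev₂
  have hnext : x (q + 1 + 1) = 1 :=
    hq _ (fun h => h2 (by linear_combination h)) (fun h => h1 (by linear_combination h))
  have hsum : x q + x (q + 1) = 1 := by
    have := hx.sum_one_sub
    rw [Fintype.sum_eq_add q (q + 1) hq1 (fun e he => by rw [hq e he.1 he.2, sub_self])] at this
    linarith
  have hsub := sum_le_univ_sum_of_nonneg (s := {q - 1, q, q + 1})
    (f := fun e => arccos (x e * x (e + 1))) (fun e => arccos_nonneg _)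
  rw [sum_insert (by simp [hprev₁, hprev₂]), sum_pair hq1] at hsub
  simp only [sub_add_cancel, hprev, hnext, one_mul, mul_one] at hsub
  have := pi_le_arccos_mul_add_arccos_mul_add_arccos_mul zero_le_one le_rfl
    (hx.nonneg q) (hx.le_one q) (hx.nonneg _) (hx.le_one _) (by linarith)
  rw [one_mul, mul_one] at this
  rw [arccosEdgeSum]
  linarith

theorem pi_le_arccosEdgeSum_add_one (hm : 3 ≤ m) {x : Fin m → ℝ} (hx : UnitDeficit x) :
    π ≤ arccosEdgeSum (· + 1) x := by
  obtain rfl | hm4 := hm.eq_or_lt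
  · have hsum : x 0 + x 1 + x 2 = 2 := by
      have := hx.sum_eq
      simp only [Fin.sum_univ_three, Fintype.card_fin, Nat.cast_ofNat] at this
      linarith
    have := pi_le_arccos_mul_add_arccos_mul_add_arccos_mul (hx.nonneg 0) (hx.le_one 0)
      (hx.nonneg 1) (hx.le_one 1) (hx.nonneg 2) (hx.le_one 2) hsum
    simpa [arccosEdgeSum, Fin.sum_univ_three] using this
  have h1 : (1 : Fin m) ≠ 0 := by simp [Fin.ext_iff, Nat.mod_eq_of_lt (by omega : 1 < m)]
  induction hn : #{e | x e ≠ 1} using Nat.strong_induction_on generalizing x with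
  | _ n ih =>
    by_cases hpair : ∃ i j, x i ≠ 1 ∧ x j ≠ 1 ∧ i ≠ j ∧ i + 1 ≠ j ∧ j + 1 ≠ i
    · obtain ⟨i, j, hi, hj, hij, hij', hji'⟩ := hpair
      have hσ : ∀ e ∈ ({i, j} : Set (Fin m)), e + 1 ∉ ({i, j} : Set (Fin m)) := by
        have hs (e : Fin m) : e + 1 ≠ e := fun h => h1 (by linear_combination h)
        simp only [Set.mem_insert_iff, Set.mem_singleton_iff]
        rintro e (rfl | rfl) <;> simp [hs, hij', hji']
      obtain ⟨y, hy, hlt, hle⟩ := hx.exists_card_ne_one_lt (· + 1) hij hi hj hσ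
      exact (ih _ (hn ▸ hlt) hy rfl).trans hle
    · push Not at hpair
      obtain ⟨p, hp⟩ := hx.exists_ne_one
      obtain ⟨q, hq⟩ := Fin.exists_forall_eq_or_eq_add_one hm4 (P := fun e => x e ≠ 1)
        (fun i j hi hj hij => by by_contra! h; exact h.2 (hpair i j hi hj hij h.1)) hp
      refine pi_le_arccosEdgeSum_of_eq_one hm hx q fun e hq₁ hq₂ => ?_
      by_contra he
      rcases hq e he with h | h <;> contradiction

end Cycle

theorem stmt0_general (m : ℕ) (hm : 3 ≤ m) (x : ℕ → ℝ)
    (hper : ∀ i, x (i + m) = x i)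
    (h1 : ∀ i, x i ≤ 1)
    (hsum : ∑ i ∈ Finset.range m, x i = m - 1) :
    Real.pi ≤ ∑ i ∈ Finset.range m, Real.arccos (x i * x (i + 1)) := by
  have : NeZero m := ⟨by omega⟩
  have hx : UnitDeficit (fun i : Fin m => x i) :=
    ⟨fun i => h1 i, by rw [Fin.sum_univ_eq_sum_range x, hsum, Fintype.card_fin]⟩
  have hnext (i : Fin m) : x ((i + 1 : Fin m) : ℕ) = x (i + 1) := by
    rw [Fin.val_add, Fin.val_one', Nat.add_mod_mod]
    exact Function.Periodic.map_mod_nat hper _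
  calc π ≤ arccosEdgeSum (· + 1) (fun i : Fin m => x i) := pi_le_arccosEdgeSum_add_one hm hx
    _ = _ := by
      simp only [arccosEdgeSum, hnext]
      exact Fin.sum_univ_eq_sum_range (fun i => arccos (x i * x (i + 1))) m

/-- Theorem (optimization inequality): if `m ≥ 3`, `0 ≤ x i ≤ 1`,
`x` is `m`-periodic (cyclic indices) and `∑_{i<m} x i = m - 1`, then
`∑_{i<m} arccos (x i * x (i+1)) ≥ π`. -/
theorem stmt0 (m : ℕ) (hm : 3 ≤ m) (x : ℕ → ℝ)
    (hper : ∀ i, x (i + m) = x i)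
    (h0 : ∀ i, 0 ≤ x i) (h1 : ∀ i, x i ≤ 1)
    (hsum : ∑ i ∈ Finset.range m, x i = m - 1) :
    Real.pi ≤ ∑ i ∈ Finset.range m, Real.arccos (x i * x (i + 1)) :=
  stmt0_general m hm x hper h1 hsum
end

section
/- Let m ≥ 3 and let x_1, ..., x_m be real numbers with 0 ≤ x_i ≤ 1 and ∑_{i=1}^m x_i = m - 1. If ∑_{i=1}^m arccos(x_i x_{i+1}) = π (indices mod m), then there exists an index i such that x_i = 0 and x_j = 1 for all j ≠ i. -/
/-!
Write `u i = 1 - x i`, so that `u ≥ 0` and `∑ u i = 1`; we show that the cyclic sum exceeds `π`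
unless some `x i = 0`. Concavity of `arccos` on `[0, 1]` gives
`arccos (a b) ≥ arccos a + (1 - b) arcsin a`, and it makes `w ↦ arccos (1 - w)` superadditive;
moreover `arccos (1 - w) ≥ √(2w)`.

If some `x k = s ∈ (0, 1/2]`, the two terms containing `x k` are at least
`2 arccos s + σ arcsin s` with `σ = u (k-1) + u (k+1) ≤ s`. Every other `u i` is at most `s`, so
`x i x (i+1) ≤ 1 - 3/4 (u i + u (i+1))`, and superadditivity bounds the remaining terms below by
`arccos (1 - W) ≥ √(2W)`, `W = 3/4 (2s - σ)`. An explicit estimate gives `√(2W) > (2 - σ) arcsin s`,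
hence a total above `2 arccos s + 2 arcsin s = π`.

If all `x i > 1/2`, adding the two lower bounds for each term (one for each factor) gives
`∑ (2 - u (i-1) - u (i+1)) arccos (x i) ≤ π`, while `2 - u (i-1) - u (i+1) ≥ 1 + u i ≥ 2 - x i` and
`(2 - x) arccos x > π (1 - x)` for `1/2 < x < 1`, which is tight at `x = 1/2`, make the left side
exceed `π ∑ u i = π`.
-/

open Real Finset

namespace Real

theorem concaveOn_arccos : ConcaveOn ℝ (Set.Icc 0 1) arccos := by
  refine ⟨convex_Icc 0 1, fun a ha b hb p q hp hq hpq => ?_⟩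
  have hA : arccos a ∈ Set.Icc (-(π / 2)) (π / 2) :=
    ⟨by linarith [arccos_nonneg a, pi_pos], arccos_le_pi_div_two.2 ha.1⟩
  have hB : arccos b ∈ Set.Icc (-(π / 2)) (π / 2) :=
    ⟨by linarith [arccos_nonneg b, pi_pos], arccos_le_pi_div_two.2 hb.1⟩
  -- `arccos` inverts `cos`, which is decreasing and concave on `[0, π / 2]`
  have hcos := strictConcaveOn_cos_Icc.concaveOn.2 hA hB hp hq hpq
  simp only [smul_eq_mul, cos_arccos (by linarith [ha.1]) ha.2,
    cos_arccos (by linarith [hb.1]) hb.2] at hcos ⊢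
  calc p * arccos a + q * arccos b = arccos (cos (p * arccos a + q * arccos b)) := by
        rw [arccos_cos (by nlinarith [arccos_nonneg a, arccos_nonneg b])
          (by nlinarith [hA.2, hB.2, pi_pos])]
    _ ≤ arccos (p * a + q * b) := arccos_le_arccos hcos

theorem arccos_add_mul_arcsin_le_arccos_mul {a b : ℝ} (ha₀ : 0 ≤ a) (ha₁ : a ≤ 1)
    (hb₀ : 0 ≤ b) (hb₁ : b ≤ 1) : arccos a + (1 - b) * arcsin a ≤ arccos (a * b) := by
  have h := concaveOn_arccos.2 ⟨ha₀, ha₁⟩ ⟨le_rfl, zero_le_one⟩ hb₀ (sub_nonneg.2 hb₁)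
    (add_sub_cancel b 1)
  simp only [smul_eq_mul, mul_zero, add_zero, arccos_zero, mul_comm b a] at h
  rw [arccos_eq_pi_div_two_sub_arcsin] at h ⊢
  linarith

theorem mul_arccos_one_sub_le {w W : ℝ} (hw : 0 ≤ w) (hwW : w ≤ W) (hW : W ≤ 1) :
    w * arccos (1 - W) ≤ W * arccos (1 - w) := by
  rcases (hw.trans hwW).eq_or_lt with rfl | hW₀
  · simp [le_antisymm hwW hw]
  have h := concaveOn_arccos.2 ⟨zero_le_one, le_rfl⟩ ⟨sub_nonneg.2 hW, by linarith⟩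
    (sub_nonneg.2 ((div_le_one hW₀).2 hwW)) (div_nonneg hw hW₀.le) (sub_add_cancel 1 (w / W))
  simp only [smul_eq_mul, arccos_one, mul_zero, zero_add] at h
  rw [show (1 - w / W) * 1 + w / W * (1 - W) = 1 - w by field_simp; ring] at h
  rwa [div_mul_eq_mul_div, div_le_iff₀ hW₀, mul_comm (arccos _)] at h

theorem arccos_one_sub_sum_le_sum {ι : Type*} (s : Finset ι) {w : ι → ℝ}
    (hw : ∀ i ∈ s, 0 ≤ w i) (hs : ∑ i ∈ s, w i ≤ 1) :
    arccos (1 - ∑ i ∈ s, w i) ≤ ∑ i ∈ s, arccos (1 - w i) := by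
  rcases (sum_nonneg hw).eq_or_lt with hW | hW
  · rw [← hW, sub_zero, arccos_one]
    exact sum_nonneg fun i _ => arccos_nonneg _
  refine le_of_mul_le_mul_left ?_ hW
  calc (∑ i ∈ s, w i) * arccos (1 - ∑ i ∈ s, w i)
      = ∑ i ∈ s, w i * arccos (1 - ∑ i ∈ s, w i) := sum_mul ..
    _ ≤ ∑ i ∈ s, (∑ i ∈ s, w i) * arccos (1 - w i) := sum_le_sum fun i hi =>
        mul_arccos_one_sub_le (hw i hi) (single_le_sum hw hi) hs
    _ = (∑ i ∈ s, w i) * ∑ i ∈ s, arccos (1 - w i) := (mul_sum ..).symm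

theorem arccos_one_sub_le_arccos_mul {a b : ℝ} (ha₀ : 0 ≤ a) (ha : a ≤ 1 / 2) (hb₀ : 0 ≤ b)
    (hb : b ≤ 1 / 2) : arccos (1 - 3 / 4 * (a + b)) ≤ arccos ((1 - a) * (1 - b)) :=
  arccos_le_arccos (by nlinarith)

theorem sqrt_two_mul_le_arccos_one_sub {w : ℝ} (hw₀ : 0 ≤ w) (hw₂ : w ≤ 2) :
    √(2 * w) ≤ arccos (1 - w) := by
  have h := one_sub_sq_div_two_le_cos (x := arccos (1 - w))
  rw [cos_arccos (by linarith) (by linarith)] at h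
  exact sqrt_le_iff.2 ⟨arccos_nonneg _, by linarith⟩

theorem arcsin_le_pi_div_three_mul {s : ℝ} (hs₀ : 0 ≤ s) (hs : s ≤ 1 / 2) :
    arcsin s ≤ π / 3 * s := by
  have h := strictConcaveOn_sin_Icc.concaveOn.2 (show 0 ∈ Set.Icc 0 π from ⟨le_rfl, pi_pos.le⟩)
    (show π / 6 ∈ Set.Icc 0 π from ⟨by positivity, by linarith [pi_pos]⟩)
    (by linarith : 0 ≤ 1 - 2 * s) (by linarith : 0 ≤ 2 * s) (sub_add_cancel 1 (2 * s))
  simp only [smul_eq_mul, sin_zero, mul_zero, zero_add, sin_pi_div_six] at h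
  calc arcsin s ≤ arcsin (sin (2 * s * (π / 6))) := monotone_arcsin (by linarith)
    _ = π / 3 * s := by
      rw [arcsin_sin] <;> nlinarith [pi_pos]

theorem two_sub_mul_arcsin_lt_sqrt {s σ : ℝ} (hs₀ : 0 < s) (hs : s ≤ 1 / 2) (hσ₀ : 0 ≤ σ)
    (hσ : σ ≤ s) : (2 - σ) * arcsin s < √(3 * (2 * s - σ) / 2) := by
  have hπ := pi_lt_d2
  calc (2 - σ) * arcsin s ≤ (2 - σ) * (π / 3 * s) :=
        mul_le_mul_of_nonneg_left (arcsin_le_pi_div_three_mul hs₀.le hs) (by linarith)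
    _ < √(3 * (2 * s - σ) / 2) := by
      refine lt_sqrt_of_sq_lt ?_
      have hπ2 : π ^ 2 < 9.93 := by nlinarith [pi_pos]
      have hs2 := mul_nonneg (sub_nonneg.2 hσ) (sub_nonneg.2 hs)
      have key : (2 - σ) ^ 2 * s ^ 2 * 9.93 / 9 < 3 * (2 * s - σ) / 2 := by
        nlinarith [mul_nonneg hσ₀ hs₀.le, mul_nonneg (mul_nonneg hσ₀ hs₀.le) (sub_nonneg.2 hs),
          mul_nonneg (mul_nonneg hσ₀ hσ₀) (sub_nonneg.2 hs), mul_nonneg hs2 hs₀.le,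
          mul_nonneg (mul_nonneg hs₀.le hs₀.le) (sub_nonneg.2 hs)]
      calc ((2 - σ) * (π / 3 * s)) ^ 2 = (2 - σ) ^ 2 * s ^ 2 * π ^ 2 / 9 := by ring
        _ ≤ (2 - σ) ^ 2 * s ^ 2 * 9.93 / 9 := by gcongr
        _ < _ := key

theorem one_half_mul_add_le_cos_pi_div_three_sub {y : ℝ} (hy : 0 < y) :
    1 / 2 * (1 - y ^ 2 / 2) + √3 / 2 * (y - y ^ 3 / 6) ≤ cos (π / 3 - y) := by
  rw [cos_sub, cos_pi_div_three, sin_pi_div_three]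
  have := one_sub_sq_div_two_le_cos (x := y)
  have := sin_gt_sub_cube hy
  nlinarith [sqrt_nonneg 3]

theorem pi_sub_mul_one_sub_cos_lt {t : ℝ} (ht₀ : 0 < t) (ht : t < π / 3) :
    (π - t) * (1 - cos t) < t := by
  have hπ₁ := pi_gt_d6
  have hπ₂ := pi_lt_d6
  rcases le_or_gt t 0.8 with ht' | ht'
  · have hcos : 1 - cos t ≤ t ^ 2 / 2 := by linarith [one_sub_sq_div_two_le_cos (x := t)]
    have : (π - t) * t < 2 := by nlinarith
    nlinarith [mul_le_mul_of_nonneg_left hcos (by linarith : 0 ≤ π - t)]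
  · -- expand around `π / 3`, where the inequality becomes an equality
    obtain ⟨y, rfl⟩ : ∃ y, t = π / 3 - y := ⟨π / 3 - t, by ring⟩
    have hy₀ : 0 < y := by linarith
    have hy : y < 0.25 := by linarith
    have h3 := sq_sqrt (show (0 : ℝ) ≤ 3 by norm_num)
    have h3₁ : (1.732 : ℝ) < √3 := by nlinarith [sqrt_nonneg 3]
    have h3₂ : √3 < 1.7321 := by nlinarith [sqrt_nonneg 3]
    have hcos := one_half_mul_add_le_cos_pi_div_three_sub hy₀
    have hπ3 : 1.8137 < π * √3 / 3 := by nlinarith [mul_lt_mul hπ₁ h3₁.le (by norm_num) pi_pos.le]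
    have hpoly : 3 / 2 - π * √3 / 3 + y * (π / 6 - √3 / 2) + y ^ 2 * (π * √3 / 18 + 1 / 4)
        + y ^ 3 * (√3 / 12) < 0 := by
      have hπ3' : π * √3 / 18 < 0.31 := by
        nlinarith [mul_lt_mul hπ₂ h3₂.le (by positivity) (by norm_num : (0 : ℝ) ≤ 3.141593)]
      have hy2 : y ^ 2 < 0.0625 := by nlinarith
      have hy3 : y ^ 3 < 0.02 := by nlinarith
      have e1 : y * (π / 6 - √3 / 2) < 0 := mul_neg_of_pos_of_neg hy₀ (by linarith)
      have e2 : y ^ 2 * (π * √3 / 18 + 1 / 4) ≤ 0.0625 * 0.56 :=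
        mul_le_mul hy2.le (by linarith) (by positivity) (by norm_num)
      have e3 : y ^ 3 * (√3 / 12) ≤ 0.02 * 0.15 :=
        mul_le_mul hy3.le (by linarith) (by positivity) (by norm_num)
      linarith
    calc (π - (π / 3 - y)) * (1 - cos (π / 3 - y))
        ≤ (2 * π / 3 + y) * (1 - (1 / 2 * (1 - y ^ 2 / 2) + √3 / 2 * (y - y ^ 3 / 6))) :=
          by nlinarith
      _ = π / 3 - y + y * (3 / 2 - π * √3 / 3 + y * (π / 6 - √3 / 2)
            + y ^ 2 * (π * √3 / 18 + 1 / 4) + y ^ 3 * (√3 / 12)) := by ring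
      _ < π / 3 - y := by nlinarith

theorem pi_mul_one_sub_lt_two_sub_mul_arccos {x : ℝ} (hx₀ : 1 / 2 < x) (hx₁ : x < 1) :
    π * (1 - x) < (2 - x) * arccos x := by
  have ht₀ : 0 < arccos x := arccos_pos.2 hx₁
  have ht : arccos x < π / 3 := by
    calc arccos x < arccos (cos (π / 3)) := by
          rw [cos_pi_div_three]
          exact strictAntiOn_arccos ⟨by norm_num, by norm_num⟩ ⟨by linarith, hx₁.le⟩ hx₀
      _ = π / 3 := arccos_cos (by positivity) (by linarith [pi_pos])
  have h := pi_sub_mul_one_sub_cos_lt ht₀ ht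
  rw [cos_arccos (by linarith) hx₁.le] at h
  linarith

end Real

section Cyclic

variable {ι : Type*} [Fintype ι]

theorem Finset.add_le_sum_univ_of_ne {f : ι → ℝ} (hf : ∀ i, 0 ≤ f i) {a b : ι} (hab : a ≠ b) :
    f a + f b ≤ ∑ i, f i := by
  classical
  simpa [sum_pair hab] using sum_le_univ_sum_of_nonneg (s := {a, b}) hf

theorem Finset.add_add_le_sum_univ_of_ne {f : ι → ℝ} (hf : ∀ i, 0 ≤ f i) {a b c : ι} (hab : a ≠ b)
    (hac : a ≠ c) (hbc : b ≠ c) : f a + f b + f c ≤ ∑ i, f i := by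
  classical
  have h := sum_le_univ_sum_of_nonneg (s := {a, b, c}) hf
  rwa [sum_insert (by simp [hab, hac]), sum_pair hbc, ← add_assoc] at h

variable (e : ι ≃ ι) {x : ι → ℝ}

theorem arccos_le_sum_compl_pair_arccos [DecidableEq ι] (he₁ : ∀ i, e i ≠ i)
    (hx₁ : ∀ i, x i ≤ 1) (hsum : ∑ i, (1 - x i) = 1) {k : ι} (hk : x k ≤ 1 / 2) :
    arccos (1 - 3 / 4 * (2 * x k - (1 - x (e.symm k)) - (1 - x (e k)))) ≤
      ∑ i ∈ {e.symm k, k}ᶜ, arccos (x i * x (e i)) := by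
  have hu₀ : ∀ i, 0 ≤ 1 - x i := fun i => sub_nonneg.2 (hx₁ i)
  have hk₁ : e.symm k ≠ k := fun h => he₁ k (e.symm_apply_eq.1 h).symm
  set w : ι → ℝ := fun i => 3 / 4 * ((1 - x i) + (1 - x (e i)))
  have hW : ∑ i ∈ {e.symm k, k}ᶜ, w i = 3 / 4 * (2 * x k - (1 - x (e.symm k)) - (1 - x (e k))) := by
    have h_univ : ∑ i, w i = 3 / 2 := by
      simp only [w, ← mul_sum, sum_add_distrib, e.sum_comp (fun i => 1 - x i), hsum]
      norm_num
    rw [← sum_add_sum_compl {e.symm k, k}, sum_pair hk₁] at h_univ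
    simp only [w, e.apply_symm_apply] at h_univ
    linarith
  rw [← hW]
  have hw₀ : ∀ i ∈ ({e.symm k, k}ᶜ : Finset ι), 0 ≤ w i :=
    fun i _ => mul_nonneg (by norm_num) (add_nonneg (hu₀ _) (hu₀ _))
  refine (arccos_one_sub_sum_le_sum _ hw₀ ?_).trans (sum_le_sum fun i hi => ?_)
  · rw [hW]
    linarith [hu₀ (e.symm k), hu₀ (e k)]
  have hu_le : ∀ j, j ≠ k → 1 - x j ≤ 1 / 2 := fun j hj => by
    linarith [add_le_sum_univ_of_ne hu₀ hj]
  simp only [mem_compl, mem_insert, mem_singleton, not_or] at hi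
  have hei : e i ≠ k := fun h => hi.1 (e.eq_symm_apply.2 h)
  simpa only [w, sub_sub_cancel] using arccos_one_sub_le_arccos_mul (hu₀ i) (hu_le i hi.2)
    (hu₀ (e i)) (hu_le (e i) hei)

theorem pi_lt_sum_arccos_of_le_half (he₁ : ∀ i, e i ≠ i) (he₂ : ∀ i, e (e i) ≠ i)
    (hx₀ : ∀ i, 0 ≤ x i) (hx₁ : ∀ i, x i ≤ 1) (hsum : ∑ i, (1 - x i) = 1) {k : ι}
    (hk₀ : 0 < x k) (hk : x k ≤ 1 / 2) :
    π < ∑ i, arccos (x i * x (e i)) := by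
  classical
  have hu₀ : ∀ i, 0 ≤ 1 - x i := fun i => sub_nonneg.2 (hx₁ i)
  set k₁ := e.symm k
  set k₂ := e k
  have hk₁ : k₁ ≠ k := fun h => he₁ k (e.symm_apply_eq.1 h).symm
  have hk₂ : k₂ ≠ k := he₁ k
  have hk₁₂ : k₁ ≠ k₂ := fun h => he₂ k₁ (by simp [k₁, k₂, ← h])
  set σ := (1 - x k₁) + (1 - x k₂)
  have hσ : σ ≤ x k := by linarith [add_add_le_sum_univ_of_ne hu₀ hk₁₂ hk₁ hk₂]
  have h_split : ∑ i, arccos (x i * x (e i)) =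
      arccos (x k₁ * x k) + arccos (x k * x k₂) + ∑ i ∈ {k₁, k}ᶜ, arccos (x i * x (e i)) := by
    rw [← sum_add_sum_compl {k₁, k}, sum_pair hk₁, e.apply_symm_apply]
  have h_k₁ : arccos (x k) + (1 - x k₁) * arcsin (x k) ≤ arccos (x k₁ * x k) := by
    rw [mul_comm (x k₁)]
    exact arccos_add_mul_arcsin_le_arccos_mul (hx₀ k) (hx₁ k) (hx₀ _) (hx₁ _)
  have h_k : arccos (x k) + (1 - x k₂) * arcsin (x k) ≤ arccos (x k * x k₂) :=
    arccos_add_mul_arcsin_le_arccos_mul (hx₀ k) (hx₁ k) (hx₀ _) (hx₁ _)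
  have h_rest : √(3 * (2 * x k - σ) / 2) ≤ ∑ i ∈ {k₁, k}ᶜ, arccos (x i * x (e i)) :=
    calc √(3 * (2 * x k - σ) / 2) = √(2 * (3 / 4 * (2 * x k - σ))) := by ring_nf
      _ ≤ arccos (1 - 3 / 4 * (2 * x k - σ)) :=
        sqrt_two_mul_le_arccos_one_sub (by linarith) (by linarith [hu₀ k₁, hu₀ k₂])
      _ ≤ _ := by
        convert arccos_le_sum_compl_pair_arccos e he₁ hx₁ hsum hk using 4
        ring
  have h_key := two_sub_mul_arcsin_lt_sqrt hk₀ hk (add_nonneg (hu₀ _) (hu₀ _)) hσ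
  rw [h_split]
  linarith [arccos_eq_pi_div_two_sub_arcsin (x k)]

theorem sum_two_mul_arccos_add_mul_arcsin_le (hx₀ : ∀ i, 0 ≤ x i) (hx₁ : ∀ i, x i ≤ 1) :
    ∑ j, (2 * arccos (x j) + ((1 - x (e j)) + (1 - x (e.symm j))) * arcsin (x j)) ≤
      2 * ∑ i, arccos (x i * x (e i)) := by
  have h_fwd : ∑ i, (arccos (x i) + (1 - x (e i)) * arcsin (x i)) ≤
      ∑ i, arccos (x i * x (e i)) :=
    sum_le_sum fun i _ => arccos_add_mul_arcsin_le_arccos_mul (hx₀ i) (hx₁ i) (hx₀ _) (hx₁ _)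
  have h_bwd : ∑ j, (arccos (x j) + (1 - x (e.symm j)) * arcsin (x j)) ≤
      ∑ i, arccos (x i * x (e i)) := by
    rw [← e.sum_comp (fun j => arccos (x j) + (1 - x (e.symm j)) * arcsin (x j))]
    refine sum_le_sum fun i _ => ?_
    simpa [mul_comm (x (e i))] using
      arccos_add_mul_arcsin_le_arccos_mul (hx₀ (e i)) (hx₁ _) (hx₀ i) (hx₁ i)
  calc _ = ∑ j, (arccos (x j) + (1 - x (e j)) * arcsin (x j)) +
        ∑ j, (arccos (x j) + (1 - x (e.symm j)) * arcsin (x j)) := by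
        rw [← sum_add_distrib]
        exact sum_congr rfl fun j _ => by ring
    _ ≤ _ := by linarith

theorem pi_lt_sum_arccos_of_forall_half_lt (he₁ : ∀ i, e i ≠ i) (he₂ : ∀ i, e (e i) ≠ i)
    (hx : ∀ i, 1 / 2 < x i) (hx₁ : ∀ i, x i ≤ 1) (hsum : ∑ i, (1 - x i) = 1) :
    π < ∑ i, arccos (x i * x (e i)) := by
  have hx₀ : ∀ i, 0 ≤ x i := fun i => by linarith [hx i]
  have hu₀ : ∀ i, 0 ≤ 1 - x i := fun i => sub_nonneg.2 (hx₁ i)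
  have h_upper := sum_two_mul_arccos_add_mul_arcsin_le e hx₀ hx₁
  set p : ι → ℝ := fun j => (1 - x (e j)) + (1 - x (e.symm j))
  have hp : ∀ j, p j ≤ x j := fun j => by
    have := add_add_le_sum_univ_of_ne hu₀ (a := e j) (b := e.symm j) (c := j)
      (fun h => he₂ (e.symm j) (by simp [h])) (he₁ j) (fun h => he₁ j (e.symm_apply_eq.1 h).symm)
    simp only [p]
    linarith
  have hsum_p : ∑ j, p j = 2 := by
    rw [sum_add_distrib, e.sum_comp (fun i => 1 - x i), e.symm.sum_comp (fun i => 1 - x i), hsum]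
    norm_num
  have h_shift : ∀ j, (2 - x j) * arccos (x j) + p j * (π / 2) ≤
      2 * arccos (x j) + p j * arcsin (x j) := fun j => by
    rw [arcsin_eq_pi_div_two_sub_arccos]
    nlinarith [arccos_nonneg (x j), hp j]
  have h_term : ∀ j, π * (1 - x j) + p j * (π / 2) ≤ 2 * arccos (x j) + p j * arcsin (x j) :=
    fun j => by
    rcases (hx₁ j).lt_or_eq with h | h
    · linarith [h_shift j, pi_mul_one_sub_lt_two_sub_mul_arccos (hx j) h]
    · simp [h]
  obtain ⟨j₀, hj₀⟩ : ∃ j, x j < 1 := by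
    by_contra! h
    simp [le_antisymm (hx₁ _) (h _)] at hsum
  have h_term₀ : π * (1 - x j₀) + p j₀ * (π / 2) < 2 * arccos (x j₀) + p j₀ * arcsin (x j₀) := by
    linarith [h_shift j₀, pi_mul_one_sub_lt_two_sub_mul_arccos (hx j₀) hj₀]
  have h_lower := sum_lt_sum (fun j _ => h_term j) ⟨j₀, mem_univ _, h_term₀⟩
  rw [sum_add_distrib, ← mul_sum, ← sum_mul, hsum, hsum_p] at h_lower
  linarith

theorem exists_eq_zero_of_sum_arccos_mul_eq_pi (he₁ : ∀ i, e i ≠ i) (he₂ : ∀ i, e (e i) ≠ i)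
    (hx₀ : ∀ i, 0 ≤ x i) (hx₁ : ∀ i, x i ≤ 1) (hsum : ∑ i, x i = Fintype.card ι - 1)
    (heq : ∑ i, arccos (x i * x (e i)) = π) :
    ∃ i, x i = 0 ∧ ∀ j, j ≠ i → x j = 1 := by
  have hu₀ : ∀ i, 0 ≤ 1 - x i := fun i => sub_nonneg.2 (hx₁ i)
  have hsum' : ∑ i, (1 - x i) = 1 := by
    rw [sum_sub_distrib, hsum, sum_const, card_univ, nsmul_one]
    ring
  obtain ⟨k, hk⟩ : ∃ k, x k = 0 := by
    by_contra! h
    have hpos : ∀ i, 0 < x i := fun i => (hx₀ i).lt_of_ne' (h i)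
    by_cases hsmall : ∃ k, x k ≤ 1 / 2
    · obtain ⟨k, hk⟩ := hsmall
      linarith [pi_lt_sum_arccos_of_le_half e he₁ he₂ hx₀ hx₁ hsum' (hpos k) hk]
    · simp only [not_exists, not_le] at hsmall
      linarith [pi_lt_sum_arccos_of_forall_half_lt e he₁ he₂ hsmall hx₁ hsum']
  refine ⟨k, hk, fun j hj => ?_⟩
  linarith [add_le_sum_univ_of_ne hu₀ hj, hx₁ j]

end Cyclic

theorem finRotate_ne_self {n : ℕ} (hn : 1 ≤ n) (i : Fin (n + 1)) : finRotate (n + 1) i ≠ i := by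
  rw [finRotate_apply, Ne, add_eq_left, Fin.one_eq_zero_iff]
  omega

theorem finRotate_finRotate_ne_self {n : ℕ} (hn : 2 ≤ n) (i : Fin (n + 1)) :
    finRotate (n + 1) (finRotate (n + 1) i) ≠ i := by
  rw [finRotate_apply, finRotate_apply, Ne, add_assoc, add_eq_left, Fin.ext_iff]
  simp [Fin.val_add, Nat.mod_eq_of_lt (show 2 < n + 1 by omega)]

theorem apply_coe_finRotate {α : Type*} {n : ℕ} {x : ℕ → α} (hx : x (n + 1) = x 0)
    (i : Fin (n + 1)) : x (finRotate (n + 1) i) = x (i + 1) := by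
  rw [coe_finRotate]
  split_ifs with h
  · simp [h, hx]
  · rfl

/-- Equality case of the optimization inequality: if the cyclic sum of
`arccos (x i * x (i+1))` equals `π`, then some `x i = 0` and all other
`x j = 1`. -/
theorem stmt1 (m : ℕ) (hm : 3 ≤ m) (x : ℕ → ℝ)
    (hper : ∀ i, x (i + m) = x i)
    (h0 : ∀ i, 0 ≤ x i) (h1 : ∀ i, x i ≤ 1)
    (hsum : ∑ i ∈ Finset.range m, x i = m - 1)
    (heq : ∑ i ∈ Finset.range m, Real.arccos (x i * x (i + 1)) = Real.pi) :
    ∃ i < m, x i = 0 ∧ ∀ j < m, j ≠ i → x j = 1 := by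
  obtain ⟨n, rfl⟩ : ∃ n, m = n + 1 := ⟨m - 1, by omega⟩
  have hx : x (n + 1) = x 0 := by simpa using hper 0
  have hsum' : ∑ i : Fin (n + 1), x i = Fintype.card (Fin (n + 1)) - 1 := by
    rwa [Fintype.card_fin, Fin.sum_univ_eq_sum_range (fun i => x i)]
  have heq' : ∑ i : Fin (n + 1), arccos (x i * x (finRotate (n + 1) i)) = π := by
    simp only [apply_coe_finRotate hx]
    rwa [Fin.sum_univ_eq_sum_range (fun i => arccos (x i * x (i + 1)))]
  obtain ⟨i, hi, hj⟩ := exists_eq_zero_of_sum_arccos_mul_eq_pi (finRotate (n + 1))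
    (finRotate_ne_self (by omega)) (finRotate_finRotate_ne_self (by omega))
    (fun i => h0 i) (fun i => h1 i) hsum' heq'
  exact ⟨i, i.isLt, hi, fun j hj' hji => hj ⟨j, hj'⟩ (fun h => hji (congrArg Fin.val h))⟩
end

section
/- Let m ≥ 3 and let x_1, ..., x_m be real numbers with 0 ≤ x_i ≤ 1 and ∑_{i=1}^m x_i = 1. Then ∑_{i=1}^m √(x_i + x_{i+1} − x_i x_{i+1}) ≥ √(4 + 3 ∑_{i=1}^m x_i x_{i+1}), where indices are taken modulo m. -/
open Finset

/-- shift a cyclic sum by 1 -/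
lemma sum_shift1 (m : ℕ) (g : ℕ → ℝ) (hg : ∀ i, g (i + m) = g i) :
    ∑ i ∈ Finset.range m, g (i + 1) = ∑ i ∈ Finset.range m, g i := by
  have h1 := Finset.sum_range_succ' g m
  have h2 := Finset.sum_range_succ g m
  have h3 : g m = g 0 := by simpa using hg 0
  linarith [h1, h2]

/-- shift a cyclic sum by s -/
lemma sum_shift (m : ℕ) (g : ℕ → ℝ) (hg : ∀ i, g (i + m) = g i) (s : ℕ) :
    ∑ i ∈ Finset.range m, g (i + s) = ∑ i ∈ Finset.range m, g i := by
  induction s with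
  | zero => simp
  | succ n ih =>
      have h1 : ∑ i ∈ Finset.range m, g (i + (n+1))
          = ∑ i ∈ Finset.range m, (fun j => g (j + n)) (i + 1) := by
        apply Finset.sum_congr rfl
        intro i _
        simp only []
        congr 1
        omega
      rw [h1, sum_shift1 m (fun j => g (j + n)) (fun i => by
        rw [show i + m + n = i + n + m by omega, hg (i+n)])]
      exact ih


lemma cross_bound (a b c : ℝ) (ha : 0 ≤ a) (hb : 0 ≤ b) (hc : 0 ≤ c)
    (habc : a + b + c ≤ 1) :
    b + 2 * (a * c) ≤ Real.sqrt (a + b - a * b) * Real.sqrt (b + c - b * c) := by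
  have ha1 : a ≤ 1 := by linarith
  have hb1 : b ≤ 1 := by linarith
  have hc1 : c ≤ 1 := by linarith
  have ht1 : 0 ≤ a + b - a * b := by nlinarith
  have ht2 : 0 ≤ b + c - b * c := by nlinarith
  set r := Real.sqrt (a * c) with hr_def
  have hr0 : 0 ≤ r := Real.sqrt_nonneg _
  have hr2 : r ^ 2 = a * c := Real.sq_sqrt (mul_nonneg ha hc)
  have hrle : 2 * r ≤ a + c := by
    have h1 : a * c ≤ ((a + c) / 2) ^ 2 := by nlinarith [sq_nonneg (a - c)]
    have h2 := Real.sqrt_le_sqrt h1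
    rw [Real.sqrt_sq (by linarith)] at h2
    linarith [h2.trans_eq rfl]
  have hgain : 2 * (a * c) ≤ (a + c) * r := by nlinarith
  have hlb0 : 0 ≤ b + (a + c) * r := by positivity
  have hmulsqrt : Real.sqrt (a + b - a * b) * Real.sqrt (b + c - b * c)
      = Real.sqrt ((a + b - a * b) * (b + c - b * c)) := (Real.sqrt_mul ht1 _).symm
  have hP1 : 0 ≤ b * (a + c) * (1 - b - 2 * r) :=
    mul_nonneg (mul_nonneg hb (add_nonneg ha hc)) (by linarith)
  have hP2 : 0 ≤ a * c * ((1 - b) ^ 2 - (a + c) ^ 2) :=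
    mul_nonneg (mul_nonneg ha hc) (by nlinarith)
  have hkey : (b + (a + c) * r) ^ 2 ≤ (a + b - a * b) * (b + c - b * c) := by
    nlinarith [hP1, hP2, hr2]
  have : b + (a + c) * r ≤ Real.sqrt ((a + b - a * b) * (b + c - b * c)) := by
    calc b + (a + c) * r = Real.sqrt ((b + (a + c) * r) ^ 2) := (Real.sqrt_sq hlb0).symm
      _ ≤ _ := Real.sqrt_le_sqrt hkey
  rw [hmulsqrt]
  linarith


lemma adj_bound (p a q : ℝ) (hp : 0 ≤ p) (ha : 0 ≤ a) (hq : 0 ≤ q)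
    (hsum : p + a + q ≤ 1) :
    a + a * (1 - a) * (p + q) / 2 ≤
      Real.sqrt (p + a - p * a) * Real.sqrt (a + q - a * q) := by
  have ha1 : a ≤ 1 := by linarith
  have ht1 : 0 ≤ p + a - p * a := by nlinarith
  have ht2 : 0 ≤ a + q - a * q := by nlinarith
  have hlb0 : 0 ≤ a + a * (1 - a) * (p + q) / 2 := by
    have : 0 ≤ a * (1 - a) * (p + q) := by
      apply mul_nonneg (mul_nonneg ha (by linarith)) (by linarith)
    linarith
  have hQ1 : 0 ≤ a * (1 - a) * (p + q) :=
    mul_nonneg (mul_nonneg ha (by linarith)) (by linarith)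
  have hQ2 : 0 ≤ 1 - a - a * (1 - a) * (p + q) / 4 := by nlinarith
  have hP : 0 ≤ p * q * (1 - a) ^ 2 :=
    mul_nonneg (mul_nonneg hp hq) (sq_nonneg _)
  have hkey : (a + a * (1 - a) * (p + q) / 2) ^ 2 ≤ (p + a - p * a) * (a + q - a * q) := by
    nlinarith [mul_nonneg hQ1 hQ2, hP]
  calc a + a * (1 - a) * (p + q) / 2
      = Real.sqrt ((a + a * (1 - a) * (p + q) / 2) ^ 2) := (Real.sqrt_sq hlb0).symm
    _ ≤ Real.sqrt ((p + a - p * a) * (a + q - a * q)) := Real.sqrt_le_sqrt hkey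
    _ = _ := Real.sqrt_mul ht1 _

lemma diag_bound (a b c d : ℝ) (ha : 0 ≤ a) (hb : 0 ≤ b) (hc : 0 ≤ c) (hd : 0 ≤ d)
    (hsum : a + b + c + d ≤ 1) :
    3 / 2 * ((a + b) * (c + d)) ≤
      Real.sqrt (a + b - a * b) * Real.sqrt (c + d - c * d) := by
  have ht1 : 0 ≤ a + b - a * b := by nlinarith
  have ht2 : 0 ≤ c + d - c * d := by nlinarith
  have h1 : 3 / 4 * (a + b) ≤ a + b - a * b := by nlinarith [sq_nonneg (a - b)]
  have h2 : 3 / 4 * (c + d) ≤ c + d - c * d := by nlinarith [sq_nonneg (c - d)]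
  have hs1 : 0 ≤ a + b := by linarith
  have hs2 : 0 ≤ c + d := by linarith
  have hprod : 3 / 4 * (a + b) * (3 / 4 * (c + d)) ≤ (a + b - a * b) * (c + d - c * d) :=
    mul_le_mul h1 h2 (by linarith) ht1
  have hlb0 : 0 ≤ 3 / 2 * ((a + b) * (c + d)) := by positivity
  have hkey : (3 / 2 * ((a + b) * (c + d))) ^ 2 ≤ (a + b - a * b) * (c + d - c * d) := by
    nlinarith [hprod, mul_nonneg hs1 hs2, sq_nonneg (a + b - (c + d)),
      mul_nonneg (mul_nonneg hs1 hs2) (by nlinarith [sq_nonneg (a + b - (c + d))] :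
        (0:ℝ) ≤ 1 - 4 * ((a + b) * (c + d)))]
  calc 3 / 2 * ((a + b) * (c + d))
      = Real.sqrt ((3 / 2 * ((a + b) * (c + d))) ^ 2) := (Real.sqrt_sq hlb0).symm
    _ ≤ Real.sqrt ((a + b - a * b) * (c + d - c * d)) := Real.sqrt_le_sqrt hkey
    _ = _ := Real.sqrt_mul ht1 _

set_option maxHeartbeats 2000000 in
/-- Main technical lemma: for `m ≥ 3`, `0 ≤ x i ≤ 1` cyclic with `∑ x i = 1`,
`∑ √(x i + x (i+1) - x i * x (i+1)) ≥ √(4 + 3 ∑ x i * x (i+1))`. -/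
theorem stmt2 (m : ℕ) (hm : 3 ≤ m) (x : ℕ → ℝ)
    (hper : ∀ i, x (i + m) = x i)
    (h0 : ∀ i, 0 ≤ x i) (h1 : ∀ i, x i ≤ 1)
    (hsum : ∑ i ∈ Finset.range m, x i = 1) :
    Real.sqrt (4 + 3 * ∑ i ∈ Finset.range m, x i * x (i + 1)) ≤
      ∑ i ∈ Finset.range m, Real.sqrt (x i + x (i + 1) - x i * x (i + 1)) := by
  set t : ℕ → ℝ := fun i => x i + x (i + 1) - x i * x (i + 1) with ht_def
  set u : ℕ → ℝ := fun i => Real.sqrt (t i) with hu_def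
  set S : ℝ := ∑ i ∈ Finset.range m, x i * x (i + 1) with hS_def
  have ht0 : ∀ i, 0 ≤ t i := fun i => by
    have := h0 i; have := h0 (i+1); have := h1 i; have := h1 (i+1)
    simp only [ht_def]; nlinarith
  have ht_le1 : ∀ i, t i ≤ 1 := fun i => by
    have := h0 i; have := h0 (i+1); have := h1 i; have := h1 (i+1)
    simp only [ht_def]; nlinarith
  have ht_ge1 : ∀ i, x i ≤ t i := fun i => by
    have := h0 i; have := h0 (i+1); have := h1 i; have := h1 (i+1)
    simp only [ht_def]; nlinarith
  have ht_ge2 : ∀ i, x (i+1) ≤ t i := fun i => by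
    have := h0 i; have := h0 (i+1); have := h1 i; have := h1 (i+1)
    simp only [ht_def]; nlinarith
  have htper : ∀ i, t (i + m) = t i := fun i => by
    simp only [ht_def]
    rw [show i + m + 1 = (i+1) + m by omega, hper i, hper (i+1)]
  have hu0 : ∀ i, 0 ≤ u i := fun i => Real.sqrt_nonneg _
  have husq : ∀ i, u i ^ 2 = t i := fun i => Real.sq_sqrt (ht0 i)
  have huper : ∀ i, u (i + m) = u i := fun i => by
    simp only [hu_def, htper i]
  have hL0 : 0 ≤ ∑ i ∈ Finset.range m, u i :=
    Finset.sum_nonneg fun i _ => hu0 i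
  -- key reduction to the square:
  suffices hkey : 4 + 3 * S ≤ (∑ i ∈ Finset.range m, u i) ^ 2 by
    calc Real.sqrt (4 + 3 * S) ≤ Real.sqrt ((∑ i ∈ Finset.range m, u i) ^ 2) :=
          Real.sqrt_le_sqrt hkey
      _ = ∑ i ∈ Finset.range m, u i := Real.sqrt_sq hL0
  -- sum of t's
  have hsum_t : ∑ i ∈ Finset.range m, t i = 2 - S := by
    have hshift : ∑ i ∈ Finset.range m, x (i + 1) = 1 := by
      rw [sum_shift1 m x hper]; exact hsum
    simp only [ht_def]
    rw [Finset.sum_sub_distrib, Finset.sum_add_distrib, hsum, hshift, ← hS_def]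
    ring
  -- pair bound : any two distinct indices below m sum to ≤ 1
  have hpair : ∀ j k, j < m → k < m → j ≠ k → x j + x k ≤ 1 := by
    intro j k hj hk hjk
    have hsub : ({j, k} : Finset ℕ) ⊆ Finset.range m := by
      intro z hz; simp at hz; rcases hz with h | h <;> simp [h, hj, hk]
    have hle := Finset.sum_le_sum_of_subset_of_nonneg hsub
      (fun i _ _ => h0 i)
    rw [Finset.sum_pair hjk, hsum] at hle
    exact hle
  have hshift : ∑ i ∈ Finset.range m, x (i + 1) = 1 := by
    rw [sum_shift1 m x hper]; exact hsum
  rcases Nat.lt_or_ge m 5 with hm5 | hm5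
  · interval_cases m
    · -- m = 3
      have hx3 : x 3 = x 0 := by simpa using hper 0
      have hsum3 : x 0 + x 1 + x 2 = 1 := by
        rw [Finset.sum_range_succ, Finset.sum_range_succ, Finset.sum_range_one] at hsum
        linarith
      have hS3 : S = x 0 * x 1 + x 1 * x 2 + x 2 * x 0 := by
        rw [hS_def, Finset.sum_range_succ, Finset.sum_range_succ, Finset.sum_range_one]
        norm_num [hx3]
      rw [Finset.sum_range_succ, Finset.sum_range_succ, Finset.sum_range_one, hS3]
      have hu0e : u 0 = Real.sqrt (x 0 + x 1 - x 0 * x 1) := rfl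
      have hu1e : u 1 = Real.sqrt (x 1 + x 2 - x 1 * x 2) := rfl
      have hu2e : u 2 = Real.sqrt (x 2 + x 0 - x 2 * x 0) := by
        simp only [hu_def, ht_def]
        norm_num [hx3]
      rw [hu0e, hu1e, hu2e]
      have k0 := cross_bound (x 0) (x 1) (x 2) (h0 0) (h0 1) (h0 2) hsum3.le
      have k1 := cross_bound (x 1) (x 2) (x 0) (h0 1) (h0 2) (h0 0) (by linarith)
      have k2 := cross_bound (x 2) (x 0) (x 1) (h0 2) (h0 0) (h0 1) (by linarith)
      have q0 : Real.sqrt (x 0 + x 1 - x 0 * x 1) ^ 2 = x 0 + x 1 - x 0 * x 1 :=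
        Real.sq_sqrt (by nlinarith [h0 0, h0 1, h1 1])
      have q1 : Real.sqrt (x 1 + x 2 - x 1 * x 2) ^ 2 = x 1 + x 2 - x 1 * x 2 :=
        Real.sq_sqrt (by nlinarith [h0 1, h0 2, h1 2])
      have q2 : Real.sqrt (x 2 + x 0 - x 2 * x 0) ^ 2 = x 2 + x 0 - x 2 * x 0 :=
        Real.sq_sqrt (by nlinarith [h0 2, h0 0, h1 0])
      nlinarith [k0, k1, k2, q0, q1, q2, hsum3,
        Real.sqrt_nonneg (x 0 + x 1 - x 0 * x 1),
        Real.sqrt_nonneg (x 1 + x 2 - x 1 * x 2),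
        Real.sqrt_nonneg (x 2 + x 0 - x 2 * x 0)]
    · -- m = 4
      have hx4 : x 4 = x 0 := by simpa using hper 0
      have hsum4 : x 0 + x 1 + x 2 + x 3 = 1 := by
        rw [Finset.sum_range_succ, Finset.sum_range_succ, Finset.sum_range_succ,
          Finset.sum_range_one] at hsum
        linarith
      have hS4 : S = x 0 * x 1 + x 1 * x 2 + x 2 * x 3 + x 3 * x 0 := by
        rw [hS_def, Finset.sum_range_succ, Finset.sum_range_succ, Finset.sum_range_succ,
          Finset.sum_range_one]
        norm_num [hx4]
      rw [Finset.sum_range_succ, Finset.sum_range_succ, Finset.sum_range_succ,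
        Finset.sum_range_one, hS4]
      have hu0e : u 0 = Real.sqrt (x 0 + x 1 - x 0 * x 1) := rfl
      have hu1e : u 1 = Real.sqrt (x 1 + x 2 - x 1 * x 2) := rfl
      have hu2e : u 2 = Real.sqrt (x 2 + x 3 - x 2 * x 3) := rfl
      have hu3e : u 3 = Real.sqrt (x 3 + x 0 - x 3 * x 0) := by
        simp only [hu_def, ht_def]
        norm_num [hx4]
      rw [hu0e, hu1e, hu2e, hu3e]
      have a01 := adj_bound (x 0) (x 1) (x 2) (h0 0) (h0 1) (h0 2) (by linarith [h0 3])
      have a12 := adj_bound (x 1) (x 2) (x 3) (h0 1) (h0 2) (h0 3) (by linarith [h0 0])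
      have a23 := adj_bound (x 2) (x 3) (x 0) (h0 2) (h0 3) (h0 0) (by linarith [h0 1])
      have a30 := adj_bound (x 3) (x 0) (x 1) (h0 3) (h0 0) (h0 1) (by linarith [h0 2])
      have d02 := diag_bound (x 0) (x 1) (x 2) (x 3) (h0 0) (h0 1) (h0 2) (h0 3) hsum4.le
      have d13 := diag_bound (x 1) (x 2) (x 3) (x 0) (h0 1) (h0 2) (h0 3) (h0 0) (by linarith)
      have q0 : Real.sqrt (x 0 + x 1 - x 0 * x 1) ^ 2 = x 0 + x 1 - x 0 * x 1 :=
        Real.sq_sqrt (by nlinarith [h0 0, h0 1, h1 1])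
      have q1 : Real.sqrt (x 1 + x 2 - x 1 * x 2) ^ 2 = x 1 + x 2 - x 1 * x 2 :=
        Real.sq_sqrt (by nlinarith [h0 1, h0 2, h1 2])
      have q2 : Real.sqrt (x 2 + x 3 - x 2 * x 3) ^ 2 = x 2 + x 3 - x 2 * x 3 :=
        Real.sq_sqrt (by nlinarith [h0 2, h0 3, h1 3])
      have q3 : Real.sqrt (x 3 + x 0 - x 3 * x 0) ^ 2 = x 3 + x 0 - x 3 * x 0 :=
        Real.sq_sqrt (by nlinarith [h0 3, h0 0, h1 0])
      nlinarith [a01, a12, a23, a30, d02, d13, q0, q1, q2, q3, hsum4,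
        Real.sqrt_nonneg (x 0 + x 1 - x 0 * x 1),
        Real.sqrt_nonneg (x 1 + x 2 - x 1 * x 2),
        Real.sqrt_nonneg (x 2 + x 3 - x 2 * x 3),
        Real.sqrt_nonneg (x 3 + x 0 - x 3 * x 0),
        mul_nonneg (mul_nonneg (h0 0) (h0 2)) (add_nonneg (h0 1) (h0 3)),
        mul_nonneg (mul_nonneg (h0 1) (h0 3)) (add_nonneg (h0 0) (h0 2)),
        mul_nonneg (h0 0) (h0 2), mul_nonneg (h0 1) (h0 3)]
  · -- m ≥ 5
    set C : ℕ → ℝ := fun k => ∑ i ∈ Finset.range m, u i * u (i + k) with hC_def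
    have hCnn : ∀ k, 0 ≤ C k := fun k =>
      Finset.sum_nonneg fun i _ => mul_nonneg (hu0 i) (hu0 _)
    have hinner : ∀ i : ℕ, ∑ j ∈ Finset.range m, u j = ∑ k ∈ Finset.range m, u (i + k) := by
      intro i
      rw [show (∑ k ∈ Finset.range m, u (i+k)) = ∑ k ∈ Finset.range m, u (k+i) from
        Finset.sum_congr rfl (fun k _ => by rw [add_comm])]
      exact (sum_shift m u huper i).symm
    have expand : (∑ i ∈ Finset.range m, u i)^2 = ∑ k ∈ Finset.range m, C k := by
      rw [sq, Finset.sum_mul]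
      calc ∑ i ∈ Finset.range m, u i * (∑ j ∈ Finset.range m, u j)
          = ∑ i ∈ Finset.range m, ∑ k ∈ Finset.range m, u i * u (i+k) := by
            apply Finset.sum_congr rfl; intro i _; rw [hinner i, Finset.mul_sum]
        _ = ∑ k ∈ Finset.range m, ∑ i ∈ Finset.range m, u i * u (i+k) := Finset.sum_comm
        _ = ∑ k ∈ Finset.range m, C k := rfl
    have hsubset : C 0 + C 1 + C 2 + C (m-2) + C (m-1) ≤ ∑ k ∈ Finset.range m, C k := by
      have hsub : ({0,1,2,m-2,m-1} : Finset ℕ) ⊆ Finset.range m := by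
        intro z hz
        simp only [Finset.mem_insert, Finset.mem_singleton] at hz
        simp only [Finset.mem_range]
        omega
      have hle := Finset.sum_le_sum_of_subset_of_nonneg hsub (fun k _ _ => hCnn k)
      rw [Finset.sum_insert (by simp; omega), Finset.sum_insert (by simp; omega),
          Finset.sum_insert (by simp; omega), Finset.sum_insert (by simp; omega),
          Finset.sum_singleton] at hle
      linarith
    have hC0 : C 0 = 2 - S := by
      simp only [hC_def, Nat.add_zero]
      rw [← hsum_t]
      apply Finset.sum_congr rfl
      intro i _
      rw [← husq i]; ring
    have hC1 : 1 ≤ C 1 := by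
      have hterm : ∀ i ∈ Finset.range m, x (i+1) ≤ u i * u (i+1) := by
        intro i _
        have hs1 : Real.sqrt (x (i+1)) ≤ u i := Real.sqrt_le_sqrt (ht_ge2 i)
        have hs2 : Real.sqrt (x (i+1)) ≤ u (i+1) := Real.sqrt_le_sqrt (ht_ge1 (i+1))
        have hmm := mul_le_mul hs1 hs2 (Real.sqrt_nonneg _) (hu0 i)
        calc x (i+1) = Real.sqrt (x (i+1)) * Real.sqrt (x (i+1)) :=
              (Real.mul_self_sqrt (h0 (i+1))).symm
          _ ≤ u i * u (i+1) := hmm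
      calc (1:ℝ) = ∑ i ∈ Finset.range m, x (i+1) := hshift.symm
        _ ≤ ∑ i ∈ Finset.range m, u i * u (i+1) := Finset.sum_le_sum hterm
    have hC2 : 2 * S ≤ C 2 := by
      have hterm : ∀ i ∈ Finset.range m, 2 * (x (i+1) * x (i+2)) ≤ u i * u (i+2) := by
        intro i hi
        simp only [Finset.mem_range] at hi
        have ha := h0 (i+1); have hb := h0 (i+2)
        have hab : x (i+1) + x (i+2) ≤ 1 := by
          by_cases hc : i + 2 < m
          · exact hpair (i+1) (i+2) (by omega) hc (by omega)
          · by_cases hc2 : i + 2 = m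
            · have hx2 : x (i+2) = x 0 := by rw [show i+2 = 0+m by omega, hper 0]
              rw [hx2]
              exact hpair (i+1) 0 (by omega) (by omega) (by omega)
            · have hi1 : i + 1 = m := by omega
              have hx1 : x (i+1) = x 0 := by rw [show i+1 = 0+m by omega, hper 0]
              have hx2 : x (i+2) = x 1 := by rw [show i+2 = 1+m by omega, hper 1]
              rw [hx1, hx2]
              exact hpair 0 1 (by omega) (by omega) (by omega)
        have hs1 : Real.sqrt (x (i+1)) ≤ u i := Real.sqrt_le_sqrt (ht_ge2 i)
        have hs2 : Real.sqrt (x (i+2)) ≤ u (i+2) := Real.sqrt_le_sqrt (ht_ge1 (i+2))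
        have hmm := mul_le_mul hs1 hs2 (Real.sqrt_nonneg _) (hu0 i)
        have hsqmul : Real.sqrt (x (i+1)) * Real.sqrt (x (i+2))
            = Real.sqrt (x (i+1) * x (i+2)) := (Real.sqrt_mul ha _).symm
        have h4 : 4 * (x (i+1) * x (i+2)) ≤ 1 := by
          nlinarith [sq_nonneg (x (i+1) - x (i+2)), mul_nonneg ha hb]
        have hsmall : (2 * (x (i+1) * x (i+2)))^2 ≤ x (i+1) * x (i+2) := by
          nlinarith [mul_nonneg ha hb, h4]
        have h2ab : 2 * (x (i+1) * x (i+2)) ≤ Real.sqrt (x (i+1) * x (i+2)) := by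
          calc 2 * (x (i+1) * x (i+2)) = Real.sqrt ((2 * (x (i+1) * x (i+2)))^2) :=
                (Real.sqrt_sq (by positivity)).symm
            _ ≤ Real.sqrt (x (i+1) * x (i+2)) := Real.sqrt_le_sqrt hsmall
        rw [hsqmul] at hmm
        linarith
      have hSshift : ∑ i ∈ Finset.range m, x (i+1) * x (i+2) = S := by
        have hgper : ∀ i, x (i+m) * x (i+m+1) = x i * x (i+1) := fun i => by
          rw [hper i, show i+m+1 = (i+1)+m by omega, hper (i+1)]
        have := sum_shift1 m (fun i => x i * x (i+1)) hgper
        simpa using this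
      calc 2 * S = ∑ i ∈ Finset.range m, 2 * (x (i+1) * x (i+2)) := by
            rw [← Finset.mul_sum, hSshift]
        _ ≤ ∑ i ∈ Finset.range m, u i * u (i+2) := Finset.sum_le_sum hterm
    have hCm1 : C (m-1) = C 1 := by
      have hgper : ∀ i, u (i+m) * u (i+m+1) = u i * u (i+1) := fun i => by
        rw [huper i, show i+m+1 = (i+1)+m by omega, huper (i+1)]
      have hsh := sum_shift m (fun i => u i * u (i+1)) hgper (m-1)
      calc C (m-1) = ∑ i ∈ Finset.range m, (fun i => u i * u (i+1)) (i + (m-1)) := by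
            apply Finset.sum_congr rfl
            intro i _
            simp only []
            rw [show i + (m-1) + 1 = i + m by omega, huper i]
            ring
        _ = ∑ i ∈ Finset.range m, u i * u (i+1) := hsh
        _ = C 1 := rfl
    have hCm2 : C (m-2) = C 2 := by
      have hgper : ∀ i, u (i+m) * u (i+m+2) = u i * u (i+2) := fun i => by
        rw [huper i, show i+m+2 = (i+2)+m by omega, huper (i+2)]
      have hsh := sum_shift m (fun i => u i * u (i+2)) hgper (m-2)
      calc C (m-2) = ∑ i ∈ Finset.range m, (fun i => u i * u (i+2)) (i + (m-2)) := by
            apply Finset.sum_congr rfl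
            intro i _
            simp only []
            rw [show i + (m-2) + 2 = i + m by omega, huper i]
            ring
        _ = ∑ i ∈ Finset.range m, u i * u (i+2) := hsh
        _ = C 2 := rfl
    rw [expand]
    rw [hCm1, hCm2, hC0] at hsubset
    linarith
end

section
/- Let m ≥ 5 and let x_1, ..., x_m be nonnegative reals with ∑_{i=1}^m x_i = 1 and x_i ≤ 1 for all i. Setting Δ_i := x_i + x_{i+1} − x_i x_{i+1} (indices mod m), one has ∑_{1 ≤ i < j ≤ m} √(Δ_i Δ_j) ≥ 1 + 2 ∑_{i=1}^m x_i x_{i+1}. -/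
private def dd (x : ℕ → ℝ) (i : ℕ) : ℝ := x i + x (i + 1) - x i * x (i + 1)

private def phi1 (m : ℕ) (i : ℕ) : ℕ × ℕ := if i = m - 1 then (0, m - 1) else (i, i + 1)

private def phi2 (m : ℕ) (i : ℕ) : ℕ × ℕ :=
  if i = m - 2 then (0, m - 2) else if i = m - 1 then (1, m - 1) else (i, i + 2)

private def LL1 (m : ℕ) (x : ℕ → ℝ) (i : ℕ) : ℝ := if i = m - 1 then x 0 else x (i + 1)

private def LL2 (m : ℕ) (x : ℕ → ℝ) (i : ℕ) : ℝ :=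
  if i = m - 2 then 2 * (x 0 * x (m - 1))
  else if i = m - 1 then 2 * (x 1 * x 0)
  else 2 * (x (i + 1) * x (i + 2))

private lemma sumLL1 (m : ℕ) (hm : 1 ≤ m) (x : ℕ → ℝ) :
    ∑ i ∈ Finset.range m, LL1 m x i = ∑ i ∈ Finset.range m, x i := by
  obtain ⟨k, rfl⟩ : ∃ k, m = k + 1 := ⟨m - 1, by omega⟩
  rw [Finset.sum_range_succ, Finset.sum_range_succ' x k]
  have h1 : LL1 (k + 1) x k = x 0 := by simp [LL1]
  have h2 : ∀ i ∈ Finset.range k, LL1 (k + 1) x i = x (i + 1) := by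
    intro i hi
    simp only [Finset.mem_range] at hi
    simp only [LL1, if_neg (show ¬ i = k + 1 - 1 by omega)]
  rw [h1, Finset.sum_congr rfl h2]

private lemma sumLL2 (m : ℕ) (hm : 5 ≤ m) (x : ℕ → ℝ) (hx : x m = x 0) :
    ∑ i ∈ Finset.range m, LL2 m x i = 2 * ∑ i ∈ Finset.range m, x i * x (i + 1) := by
  obtain ⟨k, rfl⟩ : ∃ k, m = k + 2 := ⟨m - 2, by omega⟩
  rw [Finset.sum_range_succ, Finset.sum_range_succ]
  have h1 : LL2 (k + 2) x (k + 1) = 2 * (x 1 * x 0) := by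
    simp only [LL2]
    rw [if_neg (by omega), if_pos (by omega)]
  have h2 : LL2 (k + 2) x k = 2 * (x 0 * x (k + 1)) := by
    simp only [LL2]
    rw [if_pos (by omega)]
    norm_num
  have h3 : ∀ i ∈ Finset.range k, LL2 (k + 2) x i = 2 * (x (i + 1) * x (i + 2)) := by
    intro i hi
    simp only [Finset.mem_range] at hi
    simp only [LL2]
    rw [if_neg (by omega), if_neg (by omega)]
  rw [h1, h2, Finset.sum_congr rfl h3,
    Finset.sum_range_succ (fun i => x i * x (i + 1)) (k + 1),
    Finset.sum_range_succ' (fun i => x i * x (i + 1)) k]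
  have hsum2 : ∑ i ∈ Finset.range k, 2 * (x (i + 1) * x (i + 2))
      = 2 * ∑ i ∈ Finset.range k, x (i + 1) * x (i + 1 + 1) := by
    rw [Finset.mul_sum]
  have hk2 : x (k + 1 + 1) = x 0 := hx
  rw [hsum2, hk2]
  ring

/-- For `m ≥ 5`, nonnegative cyclic `x i ≤ 1` with `∑ x i = 1`, setting
`Δ i = x i + x (i+1) - x i * x (i+1)`, the sum over pairs `i < j` of
`√(Δ i * Δ j)` is at least `1 + 2 ∑ x i * x (i+1)`. -/
theorem stmt3 (m : ℕ) (hm : 5 ≤ m) (x : ℕ → ℝ)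
    (hper : ∀ i, x (i + m) = x i)
    (h0 : ∀ i, 0 ≤ x i) (h1 : ∀ i, x i ≤ 1)
    (hsum : ∑ i ∈ Finset.range m, x i = 1) :
    1 + 2 * ∑ i ∈ Finset.range m, x i * x (i + 1) ≤
      ∑ p ∈ (Finset.range m ×ˢ Finset.range m).filter (fun p => p.1 < p.2),
        Real.sqrt ((x p.1 + x (p.1 + 1) - x p.1 * x (p.1 + 1)) *
          (x p.2 + x (p.2 + 1) - x p.2 * x (p.2 + 1))) := by
  classical
  show 1 + 2 * ∑ i ∈ Finset.range m, x i * x (i + 1) ≤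
      ∑ p ∈ (Finset.range m ×ˢ Finset.range m).filter (fun p => p.1 < p.2),
        Real.sqrt (dd x p.1 * dd x p.2)
  have hx0 : x m = x 0 := by have := hper 0; rwa [zero_add] at this
  have hd0 : ∀ i, 0 ≤ dd x i := by
    intro i; unfold dd; nlinarith [h0 i, h0 (i + 1), h1 i, h1 (i + 1)]
  have hdx1 : ∀ i, x i ≤ dd x i := by
    intro i; unfold dd; nlinarith [h0 (i + 1), h1 i, h0 i]
  have hdx2 : ∀ i, x (i + 1) ≤ dd x i := by
    intro i; unfold dd; nlinarith [h0 i, h1 (i + 1), h0 (i + 1)]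
  have hsum2 : ∀ a b : ℕ, a < m → b < m → a ≠ b → x a + x b ≤ 1 := by
    intro a b ha hb hab
    have hsub : ({a, b} : Finset ℕ) ⊆ Finset.range m := by
      intro t ht
      simp only [Finset.mem_insert, Finset.mem_singleton] at ht
      rcases ht with rfl | rfl
      · exact Finset.mem_range.2 ha
      · exact Finset.mem_range.2 hb
    have h := Finset.sum_le_sum_of_subset_of_nonneg hsub (fun i _ _ => h0 i)
    rw [Finset.sum_pair hab, hsum] at h
    exact h
  have hshared : ∀ i j k : ℕ, x k ≤ dd x i → x k ≤ dd x j →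
      x k ≤ Real.sqrt (dd x i * dd x j) := by
    intro i j k hi hj
    have h := Real.sqrt_le_sqrt (mul_le_mul hi hj (h0 k) (hd0 i))
    rwa [Real.sqrt_mul_self (h0 k)] at h
  have hprod : ∀ a b i j : ℕ, a < m → b < m → a ≠ b →
      x a ≤ dd x i → x b ≤ dd x j →
      2 * (x a * x b) ≤ Real.sqrt (dd x i * dd x j) := by
    intro a b i j ha hb hab hia hjb
    have h1' : Real.sqrt (x a * x b) ≤ Real.sqrt (dd x i * dd x j) :=
      Real.sqrt_le_sqrt (mul_le_mul hia hjb (h0 b) (hd0 i))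
    have hab2 : x a * x b ≤ 1 / 4 := by
      nlinarith [hsum2 a b ha hb hab, h0 a, h0 b, sq_nonneg (x a - x b), sq_nonneg (x a + x b)]
    have ht0 : 0 ≤ Real.sqrt (x a * x b) := Real.sqrt_nonneg _
    have ht2 : Real.sqrt (x a * x b) ^ 2 = x a * x b :=
      Real.sq_sqrt (mul_nonneg (h0 a) (h0 b))
    nlinarith [h1', ht0, ht2, hab2]
  -- injectivity
  have hinj1 : ∀ i ∈ Finset.range m, ∀ j ∈ Finset.range m, phi1 m i = phi1 m j → i = j := by
    intro i hi j hj h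
    simp only [Finset.mem_range] at hi hj
    simp only [phi1] at h
    split_ifs at h <;> rw [Prod.mk.injEq] at h <;> omega
  have hinj2 : ∀ i ∈ Finset.range m, ∀ j ∈ Finset.range m, phi2 m i = phi2 m j → i = j := by
    intro i hi j hj h
    simp only [Finset.mem_range] at hi hj
    simp only [phi2] at h
    split_ifs at h <;> rw [Prod.mk.injEq] at h <;> omega
  have hmem1 : ∀ i ∈ Finset.range m, phi1 m i ∈
      (Finset.range m ×ˢ Finset.range m).filter (fun p => p.1 < p.2) := by
    intro i hi
    simp only [Finset.mem_range] at hi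
    simp only [phi1]
    split_ifs <;>
      simp only [Finset.mem_filter, Finset.mem_product, Finset.mem_range, Prod.fst, Prod.snd] <;>
      omega
  have hmem2 : ∀ i ∈ Finset.range m, phi2 m i ∈
      (Finset.range m ×ˢ Finset.range m).filter (fun p => p.1 < p.2) := by
    intro i hi
    simp only [Finset.mem_range] at hi
    simp only [phi2]
    split_ifs <;>
      simp only [Finset.mem_filter, Finset.mem_product, Finset.mem_range, Prod.fst, Prod.snd] <;>
      omega
  have hdisj : Disjoint ((Finset.range m).image (phi1 m)) ((Finset.range m).image (phi2 m)) := by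
    rw [Finset.disjoint_left]
    intro p hp1 hp2
    simp only [Finset.mem_image, Finset.mem_range] at hp1 hp2
    obtain ⟨i, hi, rfl⟩ := hp1
    obtain ⟨j, hj, hji⟩ := hp2
    simp only [phi1, phi2] at hji
    split_ifs at hji <;> rw [Prod.mk.injEq] at hji <;> omega
  have hunion_sub : (Finset.range m).image (phi1 m) ∪ (Finset.range m).image (phi2 m) ⊆
      (Finset.range m ×ˢ Finset.range m).filter (fun p => p.1 < p.2) := by
    intro p hp
    rcases Finset.mem_union.1 hp with hp | hp
    · obtain ⟨i, hi, rfl⟩ := Finset.mem_image.1 hp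
      exact hmem1 i hi
    · obtain ⟨i, hi, rfl⟩ := Finset.mem_image.1 hp
      exact hmem2 i hi
  have key1 : (1 : ℝ) ≤ ∑ i ∈ Finset.range m,
      Real.sqrt (dd x (phi1 m i).1 * dd x (phi1 m i).2) := by
    rw [← hsum, ← sumLL1 m (by omega) x]
    apply Finset.sum_le_sum
    intro i hi
    simp only [Finset.mem_range] at hi
    by_cases h : i = m - 1
    · subst h
      simp only [LL1, if_pos rfl, phi1, if_pos rfl]
      apply hshared
      · exact hdx1 0
      · have := hdx2 (m - 1)
        rwa [show m - 1 + 1 = m by omega, hx0] at this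
    · simp only [LL1, if_neg h, phi1, if_neg h]
      exact hshared i (i + 1) (i + 1) (hdx2 i) (hdx1 (i + 1))
  have key2 : 2 * ∑ i ∈ Finset.range m, x i * x (i + 1) ≤
      ∑ i ∈ Finset.range m, Real.sqrt (dd x (phi2 m i).1 * dd x (phi2 m i).2) := by
    rw [← sumLL2 m hm x hx0]
    apply Finset.sum_le_sum
    intro i hi
    simp only [Finset.mem_range] at hi
    by_cases h2 : i = m - 2
    · subst h2
      simp only [LL2, if_pos rfl, phi2, if_pos rfl]
      apply hprod 0 (m - 1) 0 (m - 2) (by omega) (by omega) (by omega) (hdx1 0)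
      have := hdx2 (m - 2)
      rwa [show m - 2 + 1 = m - 1 by omega] at this
    · by_cases h3 : i = m - 1
      · subst h3
        simp only [LL2, if_neg h2, if_pos rfl, phi2, if_neg h2, if_pos rfl]
        apply hprod 1 0 1 (m - 1) (by omega) (by omega) (by omega) (hdx1 1)
        have := hdx2 (m - 1)
        rwa [show m - 1 + 1 = m by omega, hx0] at this
      · simp only [LL2, if_neg h2, if_neg h3, phi2, if_neg h2, if_neg h3]
        exact hprod (i + 1) (i + 2) i (i + 2) (by omega) (by omega) (by omega)
          (hdx2 i) (hdx1 (i + 2))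
  calc 1 + 2 * ∑ i ∈ Finset.range m, x i * x (i + 1)
      ≤ (∑ i ∈ Finset.range m, Real.sqrt (dd x (phi1 m i).1 * dd x (phi1 m i).2))
        + ∑ i ∈ Finset.range m, Real.sqrt (dd x (phi2 m i).1 * dd x (phi2 m i).2) := by
        linarith [key1, key2]
    _ = ∑ p ∈ (Finset.range m).image (phi1 m) ∪ (Finset.range m).image (phi2 m),
          Real.sqrt (dd x p.1 * dd x p.2) := by
        rw [Finset.sum_union hdisj, Finset.sum_image hinj1, Finset.sum_image hinj2]
    _ ≤ ∑ p ∈ (Finset.range m ×ˢ Finset.range m).filter (fun p => p.1 < p.2),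
          Real.sqrt (dd x p.1 * dd x p.2) :=
        Finset.sum_le_sum_of_subset_of_nonneg hunion_sub (fun p _ _ => Real.sqrt_nonneg _)
end

section
/- For all real x with 0 ≤ x ≤ 1, (2/π)·arccos(1 − x) ≥ (2/3)·√x + (1/3)·x, with equality if and only if x = 0 or x = 1. -/
/-!
Put `φ = arccos (1 - x) ∈ [0, π/2]`. Then `x = 1 - cos φ` and `√x = √2 sin (φ/2)`, so the
difference of the two sides is `g φ = 2φ/π - (2√2/3) sin (φ/2) - (1 - cos φ)/3`, which
vanishes at `φ = 0` and `φ = π/2`. Since `g'' φ = (√2/6) sin (φ/2) - (cos φ)/3` increases on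
`[0, π/2]`, `g'` is convex there, and `g' (π/2) = 2/π - 2/3 < 0`. Hence `g > 0` inside: either
`g' > 0` on `(0, φ)` and `g` increases up to `φ`, or `g' ≤ 0` somewhere before `φ`, and
convexity keeps `g' < 0` from there to `π/2`, so `g` decreases from `φ` to `π/2`.
-/

open Real Set

theorem apply_left_lt_of_convexOn_deriv {f f' : ℝ → ℝ} {a b t : ℝ}
    (hf : ContinuousOn f (Icc a b)) (hf' : ∀ x ∈ Ioo a b, HasDerivAt f (f' x) x)
    (hconv : ConvexOn ℝ (Icc a b) f') (hb : f' b < 0) (hab : f a = f b) (ht : t ∈ Ioo a b) :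
    f a < f t := by
  by_cases hpos : ∀ s ∈ Ioo a t, 0 < f' s
  · have hmono : StrictMonoOn f (Icc a t) := by
      refine strictMonoOn_of_hasDerivWithinAt_pos (convex_Icc a t)
        (hf.mono (Icc_subset_Icc_right ht.2.le)) ?_ (by rwa [interior_Icc])
      rw [interior_Icc]
      exact fun x hx ↦ (hf' x ⟨hx.1, hx.2.trans ht.2⟩).hasDerivWithinAt
    exact hmono (left_mem_Icc.2 ht.1.le) (right_mem_Icc.2 ht.1.le) ht.1
  · push Not at hpos
    obtain ⟨s, hs, hf's⟩ := hpos
    have hsb : s < b := hs.2.trans ht.2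
    have hneg : ∀ u ∈ Ioo s b, f' u < 0 := by
      intro u hu
      by_contra! h
      have := hconv.lt_left_of_right_lt ⟨hs.1.le, hsb.le⟩ ⟨hs.1.le.trans hsb.le, le_rfl⟩
        (by rwa [openSegment_eq_Ioo hsb]) (hb.trans_le h)
      linarith
    have hanti : StrictAntiOn f (Icc s b) := by
      refine strictAntiOn_of_hasDerivWithinAt_neg (convex_Icc s b)
        (hf.mono (Icc_subset_Icc_left hs.1.le)) ?_ (by rwa [interior_Icc])
      rw [interior_Icc]
      exact fun x hx ↦ (hf' x ⟨hs.1.trans hx.1, hx.2⟩).hasDerivWithinAt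
    rw [hab]
    exact hanti ⟨hs.2.le, ht.2.le⟩ (right_mem_Icc.2 hsb.le) ht.2

noncomputable def arccosGap (φ : ℝ) : ℝ :=
  2 / π * φ - 2 / 3 * (√2 * sin (φ / 2)) - 1 / 3 * (1 - cos φ)

noncomputable def arccosGapDeriv (φ : ℝ) : ℝ :=
  2 / π - √2 / 3 * cos (φ / 2) - 1 / 3 * sin φ

theorem hasDerivAt_arccosGap (φ : ℝ) : HasDerivAt arccosGap (arccosGapDeriv φ) φ := by
  have hsin := (((hasDerivAt_id φ).div_const 2).sin.const_mul √2).const_mul (2 / 3)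
  have hcos := ((hasDerivAt_cos φ).const_sub 1).const_mul (1 / 3)
  refine ((((hasDerivAt_id φ).const_mul (2 / π)).sub hsin).sub hcos).congr_deriv ?_
  simp only [arccosGapDeriv, id]
  ring

theorem hasDerivAt_arccosGapDeriv (φ : ℝ) :
    HasDerivAt arccosGapDeriv (√2 / 6 * sin (φ / 2) - 1 / 3 * cos φ) φ := by
  have hcos := (((hasDerivAt_id φ).div_const 2).cos.const_mul (√2 / 3)).const_sub (2 / π)
  refine (hcos.sub ((hasDerivAt_sin φ).const_mul (1 / 3))).congr_deriv ?_
  simp only [id]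
  ring

theorem convexOn_arccosGapDeriv : ConvexOn ℝ (Icc 0 (π / 2)) arccosGapDeriv := by
  have hderiv : deriv arccosGapDeriv = fun φ ↦ √2 / 6 * sin (φ / 2) - 1 / 3 * cos φ :=
    funext fun φ ↦ (hasDerivAt_arccosGapDeriv φ).deriv
  refine MonotoneOn.convexOn_of_deriv (convex_Icc _ _)
    (fun φ _ ↦ (hasDerivAt_arccosGapDeriv φ).continuousAt.continuousWithinAt)
    (fun φ _ ↦ (hasDerivAt_arccosGapDeriv φ).differentiableAt.differentiableWithinAt) ?_
  rw [hderiv, interior_Icc]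
  intro φ hφ ψ hψ hφψ
  have hsin : sin (φ / 2) ≤ sin (ψ / 2) :=
    sin_le_sin_of_le_of_le_pi_div_two (by linarith [hφ.1, pi_pos]) (by linarith [hψ.2, pi_pos])
      (by linarith)
  have hcos : cos ψ ≤ cos φ :=
    cos_le_cos_of_nonneg_of_le_pi hφ.1.le (by linarith [hψ.2, pi_pos]) hφψ
  have : 0 ≤ √2 := sqrt_nonneg 2
  dsimp only
  nlinarith

theorem arccosGap_zero : arccosGap 0 = 0 := by simp [arccosGap]

theorem arccosGap_pi_div_two : arccosGap (π / 2) = 0 := by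
  have h2 : √2 ^ 2 = 2 := sq_sqrt zero_le_two
  simp only [arccosGap, div_div, show (2 : ℝ) * 2 = 4 by norm_num, sin_pi_div_four,
    cos_pi_div_two]
  field_simp
  linear_combination -h2

theorem arccosGapDeriv_pi_div_two_neg : arccosGapDeriv (π / 2) < 0 := by
  have h2 : √2 ^ 2 = 2 := sq_sqrt zero_le_two
  have h : arccosGapDeriv (π / 2) = 2 / π - 2 / 3 := by
    simp only [arccosGapDeriv, div_div, show (2 : ℝ) * 2 = 4 by norm_num, cos_pi_div_four,
      sin_pi_div_two]
    linear_combination (-1 / 6 : ℝ) * h2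
  rw [h, sub_neg, div_lt_div_iff₀ pi_pos three_pos]
  linarith [pi_gt_three]

theorem arccosGap_pos {φ : ℝ} (hφ : φ ∈ Ioo 0 (π / 2)) : 0 < arccosGap φ := by
  have h := apply_left_lt_of_convexOn_deriv
    (fun ψ _ ↦ (hasDerivAt_arccosGap ψ).continuousAt.continuousWithinAt)
    (fun ψ _ ↦ hasDerivAt_arccosGap ψ) convexOn_arccosGapDeriv arccosGapDeriv_pi_div_two_neg
    (arccosGap_zero.trans arccosGap_pi_div_two.symm) hφ
  rwa [arccosGap_zero] at h

theorem arccosGap_nonneg {φ : ℝ} (hφ : φ ∈ Icc 0 (π / 2)) : 0 ≤ arccosGap φ := by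
  rcases eq_endpoints_or_mem_Ioo_of_mem_Icc hφ with rfl | rfl | h
  · exact arccosGap_zero.ge
  · exact arccosGap_pi_div_two.ge
  · exact (arccosGap_pos h).le

theorem arccosGap_eq_zero_iff {φ : ℝ} (hφ : φ ∈ Icc 0 (π / 2)) :
    arccosGap φ = 0 ↔ φ = 0 ∨ φ = π / 2 := by
  refine ⟨fun h ↦ ?_, by rintro (rfl | rfl) <;> simp [arccosGap_zero, arccosGap_pi_div_two]⟩
  rcases eq_endpoints_or_mem_Ioo_of_mem_Icc hφ with h' | h' | h'
  · exact Or.inl h'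
  · exact Or.inr h'
  · exact absurd h (arccosGap_pos h').ne'

theorem arccosGap_arccos_one_sub {x : ℝ} (h0 : 0 ≤ x) (h1 : x ≤ 1) :
    arccosGap (arccos (1 - x)) = 2 / π * arccos (1 - x) - (2 / 3 * √x + 1 / 3 * x) := by
  have hcos : cos (arccos (1 - x)) = 1 - x := cos_arccos (by linarith) (by linarith)
  have hsqrt : √2 * sin (arccos (1 - x) / 2) = √x := by
    rw [sin_half_eq_sqrt (arccos_nonneg _) ((arccos_le_pi _).trans (by linarith [pi_pos])),
      hcos, ← sqrt_mul zero_le_two]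
    ring_nf
  rw [arccosGap, hsqrt, hcos]
  ring

/-- For `0 ≤ x ≤ 1`: `(2/π) arccos (1-x) ≥ (2/3)√x + (1/3)x`, with equality
iff `x = 0` or `x = 1`. -/
theorem stmt6 (x : ℝ) (h0 : 0 ≤ x) (h1 : x ≤ 1) :
    (2 / 3) * Real.sqrt x + (1 / 3) * x ≤ (2 / Real.pi) * Real.arccos (1 - x) ∧
      ((2 / Real.pi) * Real.arccos (1 - x) = (2 / 3) * Real.sqrt x + (1 / 3) * x ↔
        x = 0 ∨ x = 1) := by
  have hφ : arccos (1 - x) ∈ Icc 0 (π / 2) :=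
    ⟨arccos_nonneg _, arccos_le_pi_div_two.2 (by linarith)⟩
  have hends : arccos (1 - x) = 0 ∨ arccos (1 - x) = π / 2 ↔ x = 0 ∨ x = 1 := by
    rw [arccos_eq_zero, arccos_eq_pi_div_two, sub_eq_zero, le_sub_self_iff,
      eq_comm (a := (1 : ℝ))]
    exact or_congr_left ⟨fun h ↦ le_antisymm h h0, le_of_eq⟩
  rw [← sub_nonneg, ← sub_eq_zero, ← arccosGap_arccos_one_sub h0 h1]
  exact ⟨arccosGap_nonneg hφ, (arccosGap_eq_zero_iff hφ).trans hends⟩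
end

section
/- Let x_1, ..., x_m and y_1, ..., y_m be real numbers in (0,1) such that ∑_{i=1}^m [x_i(1−y_i) + y_i(1−x_i)]/(1 − x_i y_i) = 1, and let L_1, ..., L_m be reals with L_i ≤ min(−log x_i, −log y_i) for all i. Then ∑_{i=1}^m 2/(1 + e^{L_i}) ≥ 1. -/
/-- If `x i, y i ∈ (0,1)` with `∑_{i<m} (x i (1 - y i) + y i (1 - x i))/(1 - x i * y i) = 1`
and `L i ≤ min (-log (x i)) (-log (y i))` for all `i < m`, then
`∑_{i<m} 2/(1 + e^{L i}) ≥ 1`. -/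
theorem stmt11 (m : ℕ) (x y L : ℕ → ℝ)
    (hx : ∀ i < m, 0 < x i ∧ x i < 1) (hy : ∀ i < m, 0 < y i ∧ y i < 1)
    (hsum : ∑ i ∈ Finset.range m,
      (x i * (1 - y i) + y i * (1 - x i)) / (1 - x i * y i) = 1)
    (hL : ∀ i < m, L i ≤ min (-Real.log (x i)) (-Real.log (y i))) :
    1 ≤ ∑ i ∈ Finset.range m, 2 / (1 + Real.exp (L i)) := by
  have key : ∀ i ∈ Finset.range m,
      (x i * (1 - y i) + y i * (1 - x i)) / (1 - x i * y i) ≤ 2 / (1 + Real.exp (L i)) := by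
    intro i hi
    rw [Finset.mem_range] at hi
    obtain ⟨hx0, hx1⟩ := hx i hi
    obtain ⟨hy0, hy1⟩ := hy i hi
    have hLi := hL i hi
    set a := x i
    set b := y i
    set E := Real.exp (L i)
    have hE0 : 0 < E := Real.exp_pos _
    have hEa : a * E ≤ 1 := by
      have h1 : E ≤ Real.exp (-Real.log a) := Real.exp_le_exp.2 (hLi.trans (min_le_left _ _))
      rw [Real.exp_neg, Real.exp_log hx0] at h1
      calc a * E ≤ a * a⁻¹ := by nlinarith
      _ = 1 := mul_inv_cancel₀ hx0.ne'
    have hEb : b * E ≤ 1 := by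
      have h1 : E ≤ Real.exp (-Real.log b) := Real.exp_le_exp.2 (hLi.trans (min_le_right _ _))
      rw [Real.exp_neg, Real.exp_log hy0] at h1
      calc b * E ≤ b * b⁻¹ := by nlinarith
      _ = 1 := mul_inv_cancel₀ hy0.ne'
    have hab : 1 - a * b > 0 := by nlinarith
    have hden : 0 < 1 + E := by linarith
    rw [div_le_div_iff₀ hab hden]
    nlinarith [mul_nonneg (sub_nonneg.2 hx1.le) (sub_nonneg.2 (by linarith : b * E ≤ (1:ℝ))),
      mul_nonneg (sub_nonneg.2 hy1.le) (sub_nonneg.2 (by linarith : a * E ≤ (1:ℝ)))]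
  calc (1:ℝ) = ∑ i ∈ Finset.range m, (x i * (1 - y i) + y i * (1 - x i)) / (1 - x i * y i) :=
      hsum.symm
    _ ≤ ∑ i ∈ Finset.range m, 2 / (1 + Real.exp (L i)) := Finset.sum_le_sum key
end

section
/- Let m ≥ 4 and let a_1, ..., a_m be positive reals such that sinh(a_i)·sinh(a_j) ≥ 1 for all i ≠ j. If sinh(a_1) < 2(m−1)/(m(m−2)), then ∑_{i=1}^m 1/(1 + e^{2a_i}) < 1/2. -/
/-!
Since `1 / (1 + e^{2a}) = (1 - tanh a) / 2`, the claim is `∑ tanh a_i > m - 1`.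
With `s = sinh a_0` and `c = cosh a_0`, the collar inequality `sinh a_i ≥ 1 / s` gives
`tanh a_i ≥ 1 / c` for `i ≠ 0`, so `∑ tanh a_i ≥ (s + m - 1) / c`, and squaring shows that
this exceeds `m - 1` exactly when `s · m (m - 2) < 2 (m - 1)`.
-/

open Real Finset

lemma one_div_one_add_exp_two_mul (x : ℝ) : 1 / (1 + exp (2 * x)) = (1 - tanh x) / 2 := by
  rw [tanh_eq_sinh_div_cosh, sinh_eq, cosh_eq, exp_neg, two_mul, exp_add]
  have := exp_pos x
  field_simp
  ring

lemma inv_cosh_le_tanh_of_one_le_sinh_mul_sinh {x y : ℝ} (hx : 0 < x)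
    (h : 1 ≤ sinh x * sinh y) : (cosh x)⁻¹ ≤ tanh y := by
  have hsx := sinh_pos_iff.mpr hx
  have hsy : 0 < sinh y := pos_of_mul_pos_right (one_pos.trans_le h) hsx.le
  have hcy_sq := cosh_sq y
  have hcx_sq := cosh_sq x
  have hcx := cosh_pos x
  -- `cosh² y = 1 + sinh² y ≤ (sinh x sinh y)² + sinh² y = cosh² x sinh² y`
  have hcross : cosh y ≤ cosh x * sinh y := by
    nlinarith [mul_pos hcx hsy, cosh_pos y]
  rw [tanh_eq_sinh_div_cosh, inv_eq_one_div, div_le_div_iff₀ hcx (cosh_pos y)]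
  linarith

lemma mul_cosh_lt_sinh_add {x k : ℝ} (hx : 0 < x) (hk : 0 ≤ k)
    (h : sinh x * (k ^ 2 - 1) < 2 * k) : k * cosh x < sinh x + k := by
  have hs := sinh_pos_iff.mpr hx
  refine lt_of_pow_lt_pow_left₀ 2 (by positivity) ?_
  have := cosh_sq x
  nlinarith

lemma card_sub_one_lt_sum_tanh {ι : Type*} (t : Finset ι) (a : ι → ℝ) {i₀ : ι}
    (hi₀ : i₀ ∈ t) (hpos : 0 < a i₀)
    (hcollar : ∀ i ∈ t, i ≠ i₀ → 1 ≤ sinh (a i₀) * sinh (a i))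
    (hsmall : sinh (a i₀) * ((#t - 1 : ℝ) ^ 2 - 1) < 2 * (#t - 1 : ℝ)) :
    (#t - 1 : ℝ) < ∑ i ∈ t, tanh (a i) := by
  classical
  have hk : (#(t.erase i₀) : ℝ) = #t - 1 := by
    rw [← card_erase_add_one hi₀, Nat.cast_succ, add_sub_cancel_right]
  have hrest : (#t - 1 : ℝ) * (cosh (a i₀))⁻¹ ≤ ∑ i ∈ t.erase i₀, tanh (a i) := by
    rw [← hk, ← nsmul_eq_mul]
    refine card_nsmul_le_sum _ _ _ fun i hi => ?_
    exact inv_cosh_le_tanh_of_one_le_sinh_mul_sinh hpos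
      (hcollar i (mem_of_mem_erase hi) (ne_of_mem_erase hi))
  have hc := cosh_pos (a i₀)
  calc (#t - 1 : ℝ) < (sinh (a i₀) + (#t - 1)) / cosh (a i₀) := by
        rw [lt_div_iff₀ hc]
        exact mul_cosh_lt_sinh_add hpos (by rw [← hk]; positivity) hsmall
    _ = tanh (a i₀) + (#t - 1 : ℝ) * (cosh (a i₀))⁻¹ := by
        rw [tanh_eq_sinh_div_cosh]; ring
    _ ≤ ∑ i ∈ t, tanh (a i) := by
        rw [← add_sum_erase t _ hi₀]; gcongr

/-- Collar-lemma estimate: for `m ≥ 4` positive reals `a i` with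
`sinh (a i) * sinh (a j) ≥ 1` for `i ≠ j`, if `sinh (a 0) < 2(m-1)/(m(m-2))`
then `∑_{i<m} 1/(1 + e^{2 a i}) < 1/2`. -/
theorem stmt13 (m : ℕ) (hm : 4 ≤ m) (a : ℕ → ℝ)
    (hpos : ∀ i < m, 0 < a i)
    (hcollar : ∀ i < m, ∀ j < m, i ≠ j → 1 ≤ Real.sinh (a i) * Real.sinh (a j))
    (hsmall : Real.sinh (a 0) < 2 * (m - 1) / (m * (m - 2))) :
    ∑ i ∈ Finset.range m, 1 / (1 + Real.exp (2 * a i)) < 1 / 2 := by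
  have hm0 : 0 < m := by omega
  have hM : (4 : ℝ) ≤ m := by exact_mod_cast hm
  have hsmall' : sinh (a 0) * ((#(range m) - 1 : ℝ) ^ 2 - 1) < 2 * (#(range m) - 1 : ℝ) := by
    rw [card_range, show ((m : ℝ) - 1) ^ 2 - 1 = m * (m - 2) by ring,
      ← lt_div_iff₀ (by nlinarith)]
    exact hsmall
  have htanh := card_sub_one_lt_sum_tanh (range m) a (mem_range.2 hm0) (hpos 0 hm0)
    (fun i hi hi0 => hcollar 0 hm0 i (mem_range.1 hi) (Ne.symm hi0)) hsmall'
  simp only [one_div_one_add_exp_two_mul, ← sum_div, sum_sub_distrib, sum_const, nsmul_eq_mul,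
    mul_one] at htanh ⊢
  linarith
end
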